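/- arXiv:math/9806106 — 5 statements merged into one kernel-verified Lean document; each statement's English description precedes it below -/
import Mathlib

section
/- The function d_S(f1,f2) = (ρ1 − s) + (ρ2 − s), where s is the moment of segregation of f1 and f2, satisfies the triangle inequality on S. -/
open Set Filter

noncomputable section

/-- The space `S`: continuous real functions on `[0, ρ]` with `f 0 = 0`.
The function is recorded as a map on all of `ℝ` which is constant in the
clamped variable, so that elements are determined by their values on `[0, ρ]`. -/
structure Sp where
  ρ : ℝ
  toFun : ℝ → ℝ
  ρ_nonneg : 0 ≤ ρ
  contOn : ContinuousOn toFun (Set.Icc 0 ρ)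
  zero_at_zero : toFun 0 = 0
  eq_clamp : ∀ t, toFun t = toFun (max 0 (min t ρ))

/-- The moment of segregation of two elements of `S`. -/
noncomputable def seg (f1 f2 : Sp) : ℝ :=
  sSup {t | t ≤ min f1.ρ f2.ρ ∧ ∀ t' ∈ Set.Ico (0:ℝ) t, f1.toFun t' = f2.toFun t'}

/-- The metric on `S`: `d_S(f1, f2) = (ρ1 - s) + (ρ2 - s)`. -/
noncomputable def dS (f1 f2 : Sp) : ℝ := (f1.ρ - seg f1 f2) + (f2.ρ - seg f1 f2)

lemma segSet_mem_zero (f1 f2 : Sp) :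
    (0:ℝ) ∈ {t | t ≤ min f1.ρ f2.ρ ∧ ∀ t' ∈ Set.Ico (0:ℝ) t, f1.toFun t' = f2.toFun t'} :=
  ⟨le_min f1.ρ_nonneg f2.ρ_nonneg, fun t' ht' => absurd ht'.2 (not_lt.2 ht'.1)⟩

lemma segSet_bdd (f1 f2 : Sp) :
    BddAbove {t | t ≤ min f1.ρ f2.ρ ∧ ∀ t' ∈ Set.Ico (0:ℝ) t, f1.toFun t' = f2.toFun t'} :=
  ⟨min f1.ρ f2.ρ, fun _ ht => ht.1⟩

lemma seg_nonneg (f1 f2 : Sp) : 0 ≤ seg f1 f2 :=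
  le_csSup (segSet_bdd f1 f2) (segSet_mem_zero f1 f2)

lemma seg_le (f1 f2 : Sp) : seg f1 f2 ≤ min f1.ρ f2.ρ :=
  csSup_le ⟨0, segSet_mem_zero f1 f2⟩ (fun _ ht => ht.1)

lemma seg_spec (f1 f2 : Sp) : ∀ t' ∈ Set.Ico (0:ℝ) (seg f1 f2),
    f1.toFun t' = f2.toFun t' := by
  intro t' ht'
  obtain ⟨t, htA, hlt⟩ := exists_lt_of_lt_csSup ⟨0, segSet_mem_zero f1 f2⟩ ht'.2
  exact htA.2 t' ⟨ht'.1, hlt⟩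

lemma min_seg_le (f1 f2 f3 : Sp) : min (seg f1 f2) (seg f2 f3) ≤ seg f1 f3 := by
  apply le_csSup (segSet_bdd f1 f3)
  refine ⟨le_min ?_ ?_, fun t' ht' => ?_⟩
  · exact (min_le_left _ _).trans ((seg_le f1 f2).trans (min_le_left _ _))
  · exact (min_le_right _ _).trans ((seg_le f2 f3).trans (min_le_right _ _))
  · have h12 := seg_spec f1 f2 t' ⟨ht'.1, lt_of_lt_of_le ht'.2 (min_le_left _ _)⟩
    have h23 := seg_spec f2 f3 t' ⟨ht'.1, lt_of_lt_of_le ht'.2 (min_le_right _ _)⟩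
    exact h12.trans h23

/-- `d_S` satisfies the triangle inequality on `S`. -/
theorem dS_triangle (f1 f2 f3 : Sp) : dS f1 f3 ≤ dS f1 f2 + dS f2 f3 := by
  unfold dS
  have h13 := min_seg_le f1 f2 f3
  have h12 : seg f1 f2 ≤ f2.ρ := (seg_le f1 f2).trans (min_le_right _ _)
  have h23 : seg f2 f3 ≤ f2.ρ := (seg_le f2 f3).trans (min_le_left _ _)
  rcases le_total (seg f1 f2) (seg f2 f3) with h | h
  · rw [min_eq_left h] at h13; linarith
  · rw [min_eq_right h] at h13; linarith
end
end

section
/- For any two points f1, f2 of S, the map g:[0, ρ1+ρ2−2s] → S defined by g(x) = f1 restricted to [0, ρ1−x] for 0 ≤ x ≤ ρ1−s, and g(x) = f2 restricted to [0, x+2s−ρ1] for ρ1−s ≤ x ≤ ρ1+ρ2−2s, is an isometric embedding with g(0)=f1 and g(ρ1+ρ2−2s)=f2; hence S is a geodesic metric space. -/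
open Set Filter
open Topology

noncomputable section

/-- A geodesic segment in `S` from `a` to `b`. -/
def IsGeodesicS (g : ℝ → Sp) (a b : Sp) : Prop :=
  g 0 = a ∧ g (dS a b) = b ∧
  ∀ x ∈ Set.Icc 0 (dS a b), ∀ y ∈ Set.Icc 0 (dS a b), dS (g x) (g y) = |x - y|

namespace SpAux

def A (p q : Sp) : Set ℝ :=
  {t | t ≤ min p.ρ q.ρ ∧ ∀ t' ∈ Set.Ico (0:ℝ) t, p.toFun t' = q.toFun t'}

lemma seg_def (p q : Sp) : seg p q = sSup (A p q) := rfl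

lemma zero_mem (p q : Sp) : (0:ℝ) ∈ A p q :=
  ⟨le_min p.ρ_nonneg q.ρ_nonneg, by simp⟩

lemma bdd (p q : Sp) : BddAbove (A p q) := ⟨min p.ρ q.ρ, fun _ ht => ht.1⟩

lemma seg_nonneg (p q : Sp) : 0 ≤ seg p q := le_csSup (bdd p q) (zero_mem p q)

lemma seg_le_min (p q : Sp) : seg p q ≤ min p.ρ q.ρ :=
  csSup_le ⟨0, zero_mem p q⟩ fun _ ht => ht.1

lemma le_seg_of_mem {p q : Sp} {t : ℝ} (h : t ∈ A p q) : t ≤ seg p q :=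
  le_csSup (bdd p q) h

lemma seg_agree_lt {p q : Sp} {t : ℝ} (h : t ∈ Set.Ico 0 (seg p q)) :
    p.toFun t = q.toFun t := by
  obtain ⟨u, hu, htu⟩ := exists_lt_of_lt_csSup ⟨0, zero_mem p q⟩ h.2
  exact hu.2 t ⟨h.1, htu⟩

lemma seg_eq {p q : Sp} {c : ℝ} (hc : c ∈ A p q) (hub : ∀ t ∈ A p q, t ≤ c) :
    seg p q = c :=
  le_antisymm (csSup_le ⟨c, hc⟩ hub) (le_csSup (bdd p q) hc)

lemma A_comm (p q : Sp) : A p q = A q p := by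
  ext t
  simp only [A, Set.mem_setOf_eq, min_comm p.ρ q.ρ]
  exact and_congr Iff.rfl ⟨fun h t' ht' => (h t' ht').symm, fun h t' ht' => (h t' ht').symm⟩

lemma seg_comm (p q : Sp) : seg p q = seg q p := by
  rw [seg_def, seg_def, A_comm]

lemma dS_comm (p q : Sp) : dS p q = dS q p := by
  unfold dS; rw [seg_comm]; ring

lemma seg_agree {p q : Sp} {t : ℝ} (h : t ∈ Set.Icc 0 (seg p q)) :
    p.toFun t = q.toFun t := by
  rcases lt_or_eq_of_le h.2 with hlt | heq
  · exact seg_agree_lt ⟨h.1, hlt⟩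
  · subst heq
    rcases eq_or_lt_of_le (seg_nonneg p q) with h0 | h0
    · rw [← h0, p.zero_at_zero, q.zero_at_zero]
    · set s := seg p q with hs
      have hs1 : s ≤ p.ρ := (seg_le_min p q).trans (min_le_left _ _)
      have hs2 : s ≤ q.ρ := (seg_le_min p q).trans (min_le_right _ _)
      have hsub1 : Set.Ico (0:ℝ) s ⊆ Set.Icc 0 p.ρ :=
        fun u hu => ⟨hu.1, hu.2.le.trans hs1⟩
      have hsub2 : Set.Ico (0:ℝ) s ⊆ Set.Icc 0 q.ρ :=
        fun u hu => ⟨hu.1, hu.2.le.trans hs2⟩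
      have hc1 : ContinuousWithinAt p.toFun (Set.Ico 0 s) s :=
        ((p.contOn s ⟨h0.le, hs1⟩).mono hsub1)
      have hc2 : ContinuousWithinAt q.toFun (Set.Ico 0 s) s :=
        ((q.contOn s ⟨h0.le, hs2⟩).mono hsub2)
      have hne : (𝓝[Set.Ico (0:ℝ) s] s).NeBot := by
        refine mem_closure_iff_nhdsWithin_neBot.mp ?_
        rw [closure_Ico (ne_of_lt h0)]
        exact ⟨h0.le, le_refl s⟩
      have heq' : p.toFun =ᶠ[𝓝[Set.Ico (0:ℝ) s] s] q.toFun :=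
        eventually_mem_nhdsWithin.mono fun u hu => seg_agree_lt hu
      exact tendsto_nhds_unique (hc1.congr' heq') hc2

lemma ext' (a b : Sp) (hρ : a.ρ = b.ρ)
    (h : ∀ t ∈ Set.Icc 0 a.ρ, a.toFun t = b.toFun t) : a = b := by
  have hf : a.toFun = b.toFun := by
    funext t
    have hmem : max 0 (min t a.ρ) ∈ Set.Icc 0 a.ρ :=
      ⟨le_max_left _ _, max_le a.ρ_nonneg (min_le_right _ _)⟩
    calc a.toFun t = a.toFun (max 0 (min t a.ρ)) := a.eq_clamp t
      _ = b.toFun (max 0 (min t a.ρ)) := h _ hmem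
      _ = b.toFun (max 0 (min t b.ρ)) := by rw [hρ]
      _ = b.toFun t := (b.eq_clamp t).symm
  cases a; cases b
  simp_all

def restrict (f : Sp) (r : ℝ) (hr0 : 0 ≤ r) (hr : r ≤ f.ρ) : Sp where
  ρ := r
  toFun := fun t => f.toFun (max 0 (min t r))
  ρ_nonneg := hr0
  contOn := by
    refine ContinuousOn.congr (f.contOn.mono (Set.Icc_subset_Icc le_rfl hr)) ?_
    intro t ht
    show f.toFun (max 0 (min t r)) = f.toFun t
    rw [min_eq_left ht.2, max_eq_right ht.1]
  zero_at_zero := by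
    show f.toFun (max 0 (min 0 r)) = 0
    rw [min_eq_left hr0, max_self, f.zero_at_zero]
  eq_clamp := by
    intro t
    have h1 : (0:ℝ) ≤ max 0 (min t r) := le_max_left _ _
    have h2 : max 0 (min t r) ≤ r := max_le hr0 (min_le_right _ _)
    show f.toFun (max 0 (min t r)) = f.toFun (max 0 (min (max 0 (min t r)) r))
    rw [min_eq_left h2, max_eq_right h1]

lemma restrict_val (f : Sp) (r : ℝ) (hr0 : 0 ≤ r) (hr : r ≤ f.ρ) {t : ℝ}
    (ht : t ∈ Set.Icc 0 r) : (restrict f r hr0 hr).toFun t = f.toFun t := by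
  show f.toFun (max 0 (min t r)) = f.toFun t
  rw [min_eq_left ht.2, max_eq_right ht.1]

def restrict' (f : Sp) (r : ℝ) : Sp :=
  restrict f (max 0 (min r f.ρ)) (le_max_left _ _) (max_le f.ρ_nonneg (min_le_right _ _))

lemma restrict'_eq (f : Sp) {r : ℝ} (hr0 : 0 ≤ r) (hr : r ≤ f.ρ) :
    restrict' f r = restrict f r hr0 hr := by
  unfold restrict'
  congr 1; rw [min_eq_left hr, max_eq_right hr0]

end SpAux

/-- the explicit map `g(x)` = (`f1` restricted to `[0, ρ1 - x]` for
`0 ≤ x ≤ ρ1 - s`, and `f2` restricted to `[0, x + 2s - ρ1]` for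
`ρ1 - s ≤ x ≤ ρ1 + ρ2 - 2s`) is a geodesic from `f1` to `f2`; hence `S` is a
geodesic metric space. -/
theorem geodesic_of_restrictions :
    (∀ f1 f2 : Sp, ∀ g : ℝ → Sp,
      (∀ x ∈ Set.Icc 0 (f1.ρ - seg f1 f2),
        (g x).ρ = f1.ρ - x ∧ ∀ t ∈ Set.Icc 0 (f1.ρ - x), (g x).toFun t = f1.toFun t) →
      (∀ x ∈ Set.Icc (f1.ρ - seg f1 f2) (f1.ρ + f2.ρ - 2 * seg f1 f2),
        (g x).ρ = x + 2 * seg f1 f2 - f1.ρ ∧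
        ∀ t ∈ Set.Icc 0 (x + 2 * seg f1 f2 - f1.ρ), (g x).toFun t = f2.toFun t) →
      g 0 = f1 ∧ g (f1.ρ + f2.ρ - 2 * seg f1 f2) = f2 ∧
      ∀ x ∈ Set.Icc 0 (f1.ρ + f2.ρ - 2 * seg f1 f2),
        ∀ y ∈ Set.Icc 0 (f1.ρ + f2.ρ - 2 * seg f1 f2), dS (g x) (g y) = |x - y|) ∧
    (∀ a b : Sp, ∃ g : ℝ → Sp, IsGeodesicS g a b) := by
  have main : ∀ f1 f2 : Sp, ∀ g : ℝ → Sp,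
      (∀ x ∈ Set.Icc 0 (f1.ρ - seg f1 f2),
        (g x).ρ = f1.ρ - x ∧ ∀ t ∈ Set.Icc 0 (f1.ρ - x), (g x).toFun t = f1.toFun t) →
      (∀ x ∈ Set.Icc (f1.ρ - seg f1 f2) (f1.ρ + f2.ρ - 2 * seg f1 f2),
        (g x).ρ = x + 2 * seg f1 f2 - f1.ρ ∧
        ∀ t ∈ Set.Icc 0 (x + 2 * seg f1 f2 - f1.ρ), (g x).toFun t = f2.toFun t) →
      g 0 = f1 ∧ g (f1.ρ + f2.ρ - 2 * seg f1 f2) = f2 ∧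
      ∀ x ∈ Set.Icc 0 (f1.ρ + f2.ρ - 2 * seg f1 f2),
        ∀ y ∈ Set.Icc 0 (f1.ρ + f2.ρ - 2 * seg f1 f2), dS (g x) (g y) = |x - y| := by
    intro f1 f2 g hA hB
    have hsnn : 0 ≤ seg f1 f2 := SpAux.seg_nonneg f1 f2
    have hs1 : seg f1 f2 ≤ f1.ρ := (SpAux.seg_le_min f1 f2).trans (min_le_left _ _)
    have hs2 : seg f1 f2 ≤ f2.ρ := (SpAux.seg_le_min f1 f2).trans (min_le_right _ _)
    have key : ∀ x ∈ Set.Icc (0:ℝ) (f1.ρ + f2.ρ - 2 * seg f1 f2),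
        ∀ y ∈ Set.Icc (0:ℝ) (f1.ρ + f2.ρ - 2 * seg f1 f2), x ≤ y →
        dS (g x) (g y) = y - x := by
      intro x hx y hy hxy
      rcases le_total y (f1.ρ - seg f1 f2) with hy' | hy'
      · -- both in the first regime
        have hxA := hA x ⟨hx.1, hxy.trans hy'⟩
        have hyA := hA y ⟨hy.1, hy'⟩
        have hseg : seg (g x) (g y) = f1.ρ - y := by
          apply SpAux.seg_eq
          · refine ⟨?_, ?_⟩
            · rw [hxA.1, hyA.1]; exact le_min (by linarith) le_rfl
            · intro t ht
              rw [hxA.2 t ⟨ht.1, by linarith [ht.2]⟩, hyA.2 t ⟨ht.1, by linarith [ht.2]⟩]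
          · intro t ht
            have h2 := ht.1.trans (min_le_right (g x).ρ (g y).ρ)
            rw [hyA.1] at h2
            exact h2
        simp only [dS, hseg, hxA.1, hyA.1]; ring
      · rcases le_total x (f1.ρ - seg f1 f2) with hx' | hx'
        · -- mixed regime
          have hxA := hA x ⟨hx.1, hx'⟩
          have hyB := hB y ⟨hy', hy.2⟩
          have hseg : seg (g x) (g y) = seg f1 f2 := by
            apply SpAux.seg_eq
            · refine ⟨?_, ?_⟩
              · rw [hxA.1, hyB.1]; exact le_min (by linarith) (by linarith)
              · intro t ht
                rw [hxA.2 t ⟨ht.1, by linarith [ht.2]⟩, hyB.2 t ⟨ht.1, by linarith [ht.2]⟩]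
                exact SpAux.seg_agree_lt ht
            · intro t ht
              by_contra hlt
              push_neg at hlt
              have h1 := ht.1.trans (min_le_left (g x).ρ (g y).ρ)
              have h2 := ht.1.trans (min_le_right (g x).ρ (g y).ρ)
              rw [hxA.1] at h1
              rw [hyB.1] at h2
              have htA : t ∈ SpAux.A f1 f2 := by
                refine ⟨le_min (by linarith [hx.1]) (by linarith [hy.2]), ?_⟩
                intro t' ht'
                rw [← hxA.2 t' ⟨ht'.1, by linarith [ht'.2]⟩,
                    ← hyB.2 t' ⟨ht'.1, by linarith [ht'.2]⟩]
                exact ht.2 t' ht'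
              exact absurd (SpAux.le_seg_of_mem htA) (not_le.mpr hlt)
          simp only [dS, hseg, hxA.1, hyB.1]; ring
        · -- both in the second regime
          have hxB := hB x ⟨hx', hx.2⟩
          have hyB := hB y ⟨hx'.trans hxy, hy.2⟩
          have hseg : seg (g x) (g y) = x + 2 * seg f1 f2 - f1.ρ := by
            apply SpAux.seg_eq
            · refine ⟨?_, ?_⟩
              · rw [hxB.1, hyB.1]; exact le_min le_rfl (by linarith)
              · intro t ht
                rw [hxB.2 t ⟨ht.1, ht.2.le⟩, hyB.2 t ⟨ht.1, by linarith [ht.2]⟩]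
            · intro t ht
              have h1 := ht.1.trans (min_le_left (g x).ρ (g y).ρ)
              rw [hxB.1] at h1
              exact h1
          simp only [dS, hseg, hxB.1, hyB.1]; ring
    refine ⟨?_, ?_, ?_⟩
    · have h0 := hA 0 ⟨le_refl 0, by linarith⟩
      refine SpAux.ext' _ _ (by rw [h0.1]; ring) ?_
      intro t ht
      rw [h0.1] at ht
      exact h0.2 t ht
    · have hL := hB (f1.ρ + f2.ρ - 2 * seg f1 f2) ⟨by linarith, le_refl _⟩
      refine SpAux.ext' _ _ (by rw [hL.1]; ring) ?_
      intro t ht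
      rw [hL.1] at ht
      have he : f1.ρ + f2.ρ - 2 * seg f1 f2 + 2 * seg f1 f2 - f1.ρ = f2.ρ := by ring
      rw [he] at ht
      refine (hL.2 t ?_)
      rw [he]; exact ht
    · intro x hx y hy
      rcases le_total x y with h | h
      · rw [key x hx y hy h, abs_sub_comm, abs_of_nonneg (by linarith)]
      · rw [SpAux.dS_comm, key y hy x hx h, abs_of_nonneg (by linarith)]
  refine ⟨main, ?_⟩
  intro a b
  have hsnn : 0 ≤ seg a b := SpAux.seg_nonneg a b
  have hs1 : seg a b ≤ a.ρ := (SpAux.seg_le_min a b).trans (min_le_left _ _)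
  have hs2 : seg a b ≤ b.ρ := (SpAux.seg_le_min a b).trans (min_le_right _ _)
  refine ⟨fun x => if x ≤ a.ρ - seg a b then SpAux.restrict' a (a.ρ - x)
      else SpAux.restrict' b (x + 2 * seg a b - a.ρ), ?_⟩
  have hdS : dS a b = a.ρ + b.ρ - 2 * seg a b := by unfold dS; ring
  have hmA : ∀ x ∈ Set.Icc 0 (a.ρ - seg a b),
      ((if x ≤ a.ρ - seg a b then SpAux.restrict' a (a.ρ - x)
        else SpAux.restrict' b (x + 2 * seg a b - a.ρ)) : Sp).ρ = a.ρ - x ∧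
      ∀ t ∈ Set.Icc 0 (a.ρ - x),
        ((if x ≤ a.ρ - seg a b then SpAux.restrict' a (a.ρ - x)
          else SpAux.restrict' b (x + 2 * seg a b - a.ρ)) : Sp).toFun t = a.toFun t := by
    intro x hx
    rw [if_pos hx.2]
    have hr0 : 0 ≤ a.ρ - x := by linarith [hx.2]
    have hr : a.ρ - x ≤ a.ρ := by linarith [hx.1]
    rw [SpAux.restrict'_eq a hr0 hr]
    exact ⟨rfl, fun t ht => SpAux.restrict_val a _ hr0 hr ht⟩
  have hmB : ∀ x ∈ Set.Icc (a.ρ - seg a b) (a.ρ + b.ρ - 2 * seg a b),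
      ((if x ≤ a.ρ - seg a b then SpAux.restrict' a (a.ρ - x)
        else SpAux.restrict' b (x + 2 * seg a b - a.ρ)) : Sp).ρ = x + 2 * seg a b - a.ρ ∧
      ∀ t ∈ Set.Icc 0 (x + 2 * seg a b - a.ρ),
        ((if x ≤ a.ρ - seg a b then SpAux.restrict' a (a.ρ - x)
          else SpAux.restrict' b (x + 2 * seg a b - a.ρ)) : Sp).toFun t = b.toFun t := by
    intro x hx
    rcases le_or_gt x (a.ρ - seg a b) with hc | hc
    · have hx' : x = a.ρ - seg a b := le_antisymm hc hx.1
      subst hx'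
      rw [if_pos le_rfl]
      have he : a.ρ - (a.ρ - seg a b) = seg a b := by ring
      have he2 : a.ρ - seg a b + 2 * seg a b - a.ρ = seg a b := by ring
      rw [he, SpAux.restrict'_eq a hsnn hs1, he2]
      refine ⟨rfl, ?_⟩
      intro t ht
      rw [SpAux.restrict_val a _ hsnn hs1 ht]
      exact SpAux.seg_agree ht
    · rw [if_neg (not_le.mpr hc)]
      have hr0 : 0 ≤ x + 2 * seg a b - a.ρ := by linarith
      have hr : x + 2 * seg a b - a.ρ ≤ b.ρ := by linarith [hx.2]
      rw [SpAux.restrict'_eq b hr0 hr]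
      exact ⟨rfl, fun t ht => SpAux.restrict_val b _ hr0 hr ht⟩
  have hconc := main a b _ hmA hmB
  refine ⟨hconc.1, ?_, ?_⟩
  · rw [hdS]; exact hconc.2.1
  · rw [hdS]; exact hconc.2.2
end
end

section
/- The metric space S is a real tree: every two points are joined by a unique geodesic, and if two geodesic segments [a,b] and [b,c] in S have exactly the endpoint b in common, their union [a,c] is a geodesic segment. -/
open Set Filter

noncomputable section

open Topology

-- ====== auxiliary development ======

namespace SpAux

lemma Sp.ext' {f g : Sp} (h1 : f.ρ = g.ρ) (h2 : ∀ t, f.toFun t = g.toFun t) : f = g := by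
  cases f; cases g; simp only [Sp.mk.injEq]; exact ⟨h1, funext h2⟩

def segSet (f1 f2 : Sp) : Set ℝ :=
  {t | t ≤ min f1.ρ f2.ρ ∧ ∀ t' ∈ Set.Ico (0:ℝ) t, f1.toFun t' = f2.toFun t'}

lemma seg_def_s5 (f1 f2 : Sp) : seg f1 f2 = sSup (segSet f1 f2) := rfl

lemma zero_mem_segSet (f1 f2 : Sp) : (0:ℝ) ∈ segSet f1 f2 := by
  refine ⟨le_min f1.ρ_nonneg f2.ρ_nonneg, ?_⟩
  intro t' ht'
  exact absurd ht'.2 (not_lt.2 ht'.1)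

lemma bddAbove_segSet (f1 f2 : Sp) : BddAbove (segSet f1 f2) :=
  ⟨min f1.ρ f2.ρ, fun _ ht => ht.1⟩

lemma seg_isGreatest (f1 f2 : Sp) : IsGreatest (segSet f1 f2) (seg f1 f2) := by
  constructor
  · constructor
    · exact csSup_le ⟨0, zero_mem_segSet f1 f2⟩ (fun t ht => ht.1)
    · intro t' ht'
      obtain ⟨t, htm, hlt⟩ := exists_lt_of_lt_csSup ⟨0, zero_mem_segSet f1 f2⟩ ht'.2
      exact htm.2 t' ⟨ht'.1, hlt⟩
  · intro t ht
    exact le_csSup (bddAbove_segSet f1 f2) ht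

lemma seg_nonneg_s5 (f1 f2 : Sp) : 0 ≤ seg f1 f2 :=
  (seg_isGreatest f1 f2).2 (zero_mem_segSet f1 f2)

lemma seg_le_min_s5 (f1 f2 : Sp) : seg f1 f2 ≤ min f1.ρ f2.ρ :=
  (seg_isGreatest f1 f2).1.1

lemma seg_le_left (f1 f2 : Sp) : seg f1 f2 ≤ f1.ρ :=
  (seg_le_min_s5 f1 f2).trans (min_le_left _ _)

lemma seg_le_right (f1 f2 : Sp) : seg f1 f2 ≤ f2.ρ :=
  (seg_le_min_s5 f1 f2).trans (min_le_right _ _)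

lemma apply_eq_of_lt_seg {f1 f2 : Sp} {t : ℝ} (h0 : 0 ≤ t) (h1 : t < seg f1 f2) :
    f1.toFun t = f2.toFun t :=
  (seg_isGreatest f1 f2).1.2 t ⟨h0, h1⟩

lemma apply_seg_eq (f1 f2 : Sp) : f1.toFun (seg f1 f2) = f2.toFun (seg f1 f2) := by
  rcases eq_or_lt_of_le (seg_nonneg_s5 f1 f2) with h | h
  · rw [← h, f1.zero_at_zero, f2.zero_at_zero]
  · set s := seg f1 f2 with hs
    have hs1 : s ≤ f1.ρ := seg_le_left f1 f2
    have hs2 : s ≤ f2.ρ := seg_le_right f1 f2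
    have hsub1 : Set.Ico (0:ℝ) s ⊆ Set.Icc 0 f1.ρ := fun t ht => ⟨ht.1, ht.2.le.trans hs1⟩
    have hsub2 : Set.Ico (0:ℝ) s ⊆ Set.Icc 0 f2.ρ := fun t ht => ⟨ht.1, ht.2.le.trans hs2⟩
    have h1 : ContinuousWithinAt f1.toFun (Set.Ico 0 s) s :=
      ((f1.contOn s ⟨seg_nonneg_s5 f1 f2, hs1⟩).mono hsub1)
    have h2 : ContinuousWithinAt f2.toFun (Set.Ico 0 s) s :=
      ((f2.contOn s ⟨seg_nonneg_s5 f1 f2, hs2⟩).mono hsub2)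
    have hne : (𝓝[Set.Ico (0:ℝ) s] s).NeBot := by
      rw [← mem_closure_iff_nhdsWithin_neBot, closure_Ico h.ne]
      exact ⟨le_of_lt h, le_rfl⟩
    have heq : f1.toFun =ᶠ[𝓝[Set.Ico (0:ℝ) s] s] f2.toFun := by
      filter_upwards [self_mem_nhdsWithin] with t ht
      exact apply_eq_of_lt_seg ht.1 ht.2
    exact tendsto_nhds_unique h1 (h2.congr' heq.symm)

lemma apply_eq_of_le_seg {f1 f2 : Sp} {t : ℝ} (h0 : 0 ≤ t) (h1 : t ≤ seg f1 f2) :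
    f1.toFun t = f2.toFun t := by
  rcases eq_or_lt_of_le h1 with h | h
  · rw [h]; exact apply_seg_eq f1 f2
  · exact apply_eq_of_lt_seg h0 h

lemma seg_self (f : Sp) : seg f f = f.ρ := by
  rw [seg_def_s5]
  refine IsGreatest.csSup_eq ⟨⟨by simp, fun _ _ => rfl⟩, fun t ht => ht.1.trans (min_le_left _ _)⟩

lemma segSet_comm (f1 f2 : Sp) : segSet f1 f2 = segSet f2 f1 := by
  ext t
  constructor <;> intro ⟨h1, h2⟩ <;>
    exact ⟨by rwa [min_comm], fun t' ht' => (h2 t' ht').symm⟩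

lemma seg_comm_s5 (f1 f2 : Sp) : seg f1 f2 = seg f2 f1 := by
  rw [seg_def_s5, seg_def_s5, segSet_comm]

lemma dS_def (f1 f2 : Sp) : dS f1 f2 = f1.ρ + f2.ρ - 2 * seg f1 f2 := by
  unfold dS; ring

lemma dS_comm_s5 (f1 f2 : Sp) : dS f1 f2 = dS f2 f1 := by
  rw [dS_def, dS_def, seg_comm_s5]; ring

lemma dS_nonneg (f1 f2 : Sp) : 0 ≤ dS f1 f2 := by
  have h1 := seg_le_left f1 f2
  have h2 := seg_le_right f1 f2
  rw [dS_def]; linarith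

lemma clamp_of_mem {x c : ℝ} (h0 : 0 ≤ x) (h1 : x ≤ c) : max 0 (min x c) = x := by
  rw [min_eq_left h1, max_eq_right h0]

/-- Truncation of `f` to `[0, r]` (radius clamped to `[0, f.ρ]`). -/
def trunc (f : Sp) (r : ℝ) : Sp where
  ρ := max 0 (min r f.ρ)
  toFun := fun t => f.toFun (max 0 (min t (max 0 (min r f.ρ))))
  ρ_nonneg := le_max_left _ _
  contOn := by
    have hc : Continuous fun t : ℝ => max 0 (min t (max 0 (min r f.ρ))) :=
      continuous_const.max (continuous_id.min continuous_const)
    refine f.contOn.comp hc.continuousOn ?_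
    intro t _
    refine ⟨le_max_left _ _, ?_⟩
    exact max_le f.ρ_nonneg ((min_le_right _ _).trans (max_le f.ρ_nonneg (min_le_right _ _)))
  zero_at_zero := by
    rw [min_eq_left (le_max_left _ _), max_self, f.zero_at_zero]
  eq_clamp := by
    intro t
    congr 1
    have h0 : (0:ℝ) ≤ max 0 (min t (max 0 (min r f.ρ))) := le_max_left _ _
    have h1 : max 0 (min t (max 0 (min r f.ρ))) ≤ max 0 (min r f.ρ) :=
      max_le (le_max_left _ _) (min_le_right _ _)
    rw [clamp_of_mem h0 h1]

lemma trunc_ρ {f : Sp} {r : ℝ} (h0 : 0 ≤ r) (h1 : r ≤ f.ρ) : (trunc f r).ρ = r := by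
  simp only [trunc, min_eq_left h1, max_eq_right h0]

lemma trunc_toFun {f : Sp} {r : ℝ} (h0 : 0 ≤ r) (h1 : r ≤ f.ρ) (t : ℝ) :
    (trunc f r).toFun t = f.toFun (max 0 (min t r)) := by
  simp only [trunc, min_eq_left h1, max_eq_right h0]

lemma trunc_toFun_of_mem {f : Sp} {r t : ℝ} (h0 : 0 ≤ r) (h1 : r ≤ f.ρ)
    (ht0 : 0 ≤ t) (ht1 : t ≤ r) : (trunc f r).toFun t = f.toFun t := by
  rw [trunc_toFun h0 h1, clamp_of_mem ht0 ht1]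

lemma trunc_self (f : Sp) : trunc f f.ρ = f := by
  refine Sp.ext' (trunc_ρ f.ρ_nonneg le_rfl) ?_
  intro t
  rw [trunc_toFun f.ρ_nonneg le_rfl, ← f.eq_clamp]


lemma seg_trunc {a b : Sp} {r1 r2 : ℝ} (h10 : 0 ≤ r1) (h11 : r1 ≤ a.ρ)
    (h20 : 0 ≤ r2) (h21 : r2 ≤ b.ρ) :
    seg (trunc a r1) (trunc b r2) = min (min r1 r2) (seg a b) := by
  rw [seg_def_s5]
  refine IsGreatest.csSup_eq ⟨⟨?_, ?_⟩, ?_⟩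
  · rw [trunc_ρ h10 h11, trunc_ρ h20 h21]
    exact (min_le_left _ _).trans (min_le_min le_rfl le_rfl)
  · intro t' ht'
    have htr1 : t' ≤ r1 := ht'.2.le.trans ((min_le_left _ _).trans (min_le_left _ _))
    have htr2 : t' ≤ r2 := ht'.2.le.trans ((min_le_left _ _).trans (min_le_right _ _))
    rw [trunc_toFun_of_mem h10 h11 ht'.1 htr1, trunc_toFun_of_mem h20 h21 ht'.1 htr2]
    exact apply_eq_of_lt_seg ht'.1 (lt_of_lt_of_le ht'.2 (min_le_right _ _))
  · intro t ht
    obtain ⟨ht1, ht2⟩ := ht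
    rw [trunc_ρ h10 h11, trunc_ρ h20 h21] at ht1
    rcases le_or_gt t (seg a b) with hts | hts
    · exact le_min ht1 hts
    · exfalso
      have hmem : t ∈ segSet a b := by
        refine ⟨le_min ((le_min_iff.1 ht1).1.trans h11) ((le_min_iff.1 ht1).2.trans h21), ?_⟩
        intro t' ht'
        have htr1 : t' ≤ r1 := ht'.2.le.trans (le_min_iff.1 ht1).1
        have htr2 : t' ≤ r2 := ht'.2.le.trans (le_min_iff.1 ht1).2
        rw [← trunc_toFun_of_mem h10 h11 ht'.1 htr1, ← trunc_toFun_of_mem h20 h21 ht'.1 htr2]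
        exact ht2 t' ht'
      exact absurd ((seg_isGreatest a b).2 hmem) (not_le.2 hts)

lemma dS_trunc {a b : Sp} {r1 r2 : ℝ} (h10 : 0 ≤ r1) (h11 : r1 ≤ a.ρ)
    (h20 : 0 ≤ r2) (h21 : r2 ≤ b.ρ) :
    dS (trunc a r1) (trunc b r2) = r1 + r2 - 2 * min (min r1 r2) (seg a b) := by
  rw [dS_def, seg_trunc h10 h11 h20 h21, trunc_ρ h10 h11, trunc_ρ h20 h21]

lemma trunc_seg (a b : Sp) : trunc a (seg a b) = trunc b (seg a b) := by
  have h1 := seg_le_left a b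
  have h2 := seg_le_right a b
  have h0 := seg_nonneg_s5 a b
  refine Sp.ext' (by rw [trunc_ρ h0 h1, trunc_ρ h0 h2]) ?_
  intro t
  rw [trunc_toFun h0 h1, trunc_toFun h0 h2]
  exact apply_eq_of_le_seg (le_max_left _ _)
    (max_le h0 (min_le_right _ _))

/-- The canonical geodesic from `a` to `b`. -/
def geo (a b : Sp) (x : ℝ) : Sp :=
  if x ≤ a.ρ - seg a b then trunc a (a.ρ - x) else trunc b (x + 2 * seg a b - a.ρ)

lemma geo_zero (a b : Sp) : geo a b 0 = a := by
  rw [geo, if_pos (by linarith [seg_le_left a b, seg_nonneg_s5 a b])]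
  rw [show a.ρ - 0 = a.ρ by ring, trunc_self]

lemma geo_d (a b : Sp) : geo a b (dS a b) = b := by
  have h1 := seg_le_left a b
  have h2 := seg_le_right a b
  have h0 := seg_nonneg_s5 a b
  rw [geo, dS_def]
  by_cases hd : a.ρ + b.ρ - 2 * seg a b ≤ a.ρ - seg a b
  · have hsb : seg a b = b.ρ := le_antisymm h2 (by linarith)
    rw [if_pos hd, show a.ρ - (a.ρ + b.ρ - 2 * seg a b) = seg a b by rw [hsb]; ring,
      trunc_seg, hsb, trunc_self]
  · rw [if_neg hd, show a.ρ + b.ρ - 2 * seg a b + 2 * seg a b - a.ρ = b.ρ by ring, trunc_self]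

lemma geo_dist (a b : Sp) : ∀ x ∈ Set.Icc 0 (dS a b), ∀ y ∈ Set.Icc 0 (dS a b),
    dS (geo a b x) (geo a b y) = |x - y| := by
  have h1 := seg_le_left a b
  have h2 := seg_le_right a b
  have h0 := seg_nonneg_s5 a b
  intro x hx y hy
  rw [dS_def] at hx hy
  obtain ⟨hx0, hx1⟩ := hx
  obtain ⟨hy0, hy1⟩ := hy
  rw [geo, geo]
  split_ifs with hxb hyb hyb
  · rw [dS_trunc (by linarith) (by linarith) (by linarith) (by linarith), seg_self,
      min_eq_left ((min_le_left _ _).trans (by linarith : a.ρ - x ≤ a.ρ))]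
    rcases le_total x y with h | h
    · rw [min_eq_right (by linarith), abs_of_nonpos (by linarith)]
      ring
    · rw [min_eq_left (by linarith), abs_of_nonneg (by linarith)]
      ring
  · rw [dS_trunc (by linarith) (by linarith) (by linarith) (by linarith),
      min_eq_right (le_min (by linarith) (by linarith)), abs_of_nonpos (by linarith)]
    ring
  · rw [dS_trunc (by linarith) (by linarith) (by linarith) (by linarith)]
    rw [seg_comm_s5 b a]
    rw [min_eq_right (le_min (by linarith) (by linarith)), abs_of_nonneg (by linarith)]
    ring
  · rw [dS_trunc (by linarith) (by linarith) (by linarith) (by linarith), seg_self,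
      min_eq_left ((min_le_left _ _).trans (by linarith : x + 2 * seg a b - a.ρ ≤ b.ρ))]
    rcases le_total x y with h | h
    · rw [min_eq_left (by linarith), abs_of_nonpos (by linarith)]
      ring
    · rw [min_eq_right (by linarith), abs_of_nonneg (by linarith)]
      ring

lemma geo_isGeodesic (a b : Sp) : IsGeodesicS (geo a b) a b :=
  ⟨geo_zero a b, geo_d a b, geo_dist a b⟩


lemma eq_trunc_of_seg_eq_ρ {p a : Sp} (h : seg p a = p.ρ) : p = trunc a p.ρ := by
  have hpa : p.ρ ≤ a.ρ := h ▸ seg_le_right p a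
  refine Sp.ext' (by rw [trunc_ρ p.ρ_nonneg hpa]) ?_
  intro t
  rw [trunc_toFun p.ρ_nonneg hpa, p.eq_clamp t]
  exact apply_eq_of_le_seg (le_max_left _ _)
    ((max_le p.ρ_nonneg (min_le_right _ _)).trans_eq h.symm)

/-- Characterization: a point at distance `x` from `a` and `dS a b - x` from `b`
is the point `geo a b x`. -/
lemma char {a b p : Sp} {x : ℝ} (_hx0 : 0 ≤ x)
    (hpa : dS p a = x) (hpb : dS p b = dS a b - x) : p = geo a b x := by
  set s := seg a b with hs
  set u := seg p a with hu
  set v := seg p b with hv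
  rw [dS_def] at hpa hpb
  rw [dS_def] at hpb
  have hminuv : min u v ≤ s := by
    refine (seg_isGreatest a b).2 ⟨le_min (le_trans (min_le_left _ _) (seg_le_right p a))
      (le_trans (min_le_right _ _) (seg_le_right p b)), ?_⟩
    intro t' ht'
    have h1 : p.toFun t' = a.toFun t' :=
      apply_eq_of_lt_seg ht'.1 (lt_of_lt_of_le ht'.2 (min_le_left _ _))
    have h2 : p.toFun t' = b.toFun t' :=
      apply_eq_of_lt_seg ht'.1 (lt_of_lt_of_le ht'.2 (min_le_right _ _))
    rw [← h1, h2]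
  have hsum : u + v = p.ρ + s := by linarith
  have hup : u ≤ p.ρ := seg_le_left p a
  have hvp : v ≤ p.ρ := seg_le_left p b
  have hus : s ≤ u := by
    rcases min_le_iff.1 hminuv with h | h
    all_goals linarith [min_le_left u v, min_le_right u v]
  have hvs : s ≤ v := by
    rcases le_total u v with h | h
    · linarith [min_eq_left h ▸ hminuv]
    · linarith [min_eq_right h ▸ hminuv]
  rw [geo]
  split_ifs with hbr
  · -- x ≤ a.ρ - s : then u = p.ρ
    have huv : v ≤ u := by
      rcases le_total u v with h | h
      · have := min_eq_left h ▸ hminuv; linarith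
      · exact h
    have hveq : v = s := le_antisymm (by rw [min_eq_right huv] at hminuv; exact hminuv) hvs
    have hueq : u = p.ρ := by linarith
    have hρ : p.ρ = a.ρ - x := by linarith
    rw [← hρ]
    exact eq_trunc_of_seg_eq_ρ hueq
  · -- x > a.ρ - s : then v = p.ρ
    push_neg at hbr
    have huv : u < v := by nlinarith
    have hueq : u = s := le_antisymm (by rw [min_eq_left huv.le] at hminuv; exact hminuv) hus
    have hveq : v = p.ρ := by linarith
    have hρ : p.ρ = x + 2 * s - a.ρ := by linarith
    rw [← hρ]
    exact eq_trunc_of_seg_eq_ρ hveq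

lemma char_geodesic {a b : Sp} {g : ℝ → Sp} (hg : IsGeodesicS g a b) :
    ∀ x ∈ Set.Icc 0 (dS a b), g x = geo a b x := by
  intro x hx
  obtain ⟨hg0, hgd, hgdist⟩ := hg
  have h1 : dS (g x) a = x := by
    have := hgdist x hx 0 ⟨le_rfl, dS_nonneg a b⟩
    rw [hg0] at this
    rw [this, sub_zero, abs_of_nonneg hx.1]
  have h2 : dS (g x) b = dS a b - x := by
    have := hgdist x hx (dS a b) ⟨dS_nonneg a b, le_rfl⟩
    rw [hgd] at this
    rw [this, abs_of_nonpos (by linarith [hx.2])]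
    ring
  exact char hx.1 h1 h2


lemma mem_image_left {a b : Sp} {g : ℝ → Sp} (hg : IsGeodesicS g a b) {m : ℝ}
    (h1 : seg a b ≤ m) (h2 : m ≤ a.ρ) :
    trunc a m ∈ g '' Set.Icc 0 (dS a b) := by
  have hs0 := seg_nonneg_s5 a b
  have hsb := seg_le_right a b
  refine ⟨a.ρ - m, ⟨by linarith, by rw [dS_def]; linarith⟩, ?_⟩
  rw [char_geodesic hg _ ⟨by linarith, by rw [dS_def]; linarith⟩, geo,
    if_pos (by linarith : a.ρ - m ≤ a.ρ - seg a b),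
    show a.ρ - (a.ρ - m) = m by ring]

lemma mem_image_right {a b : Sp} {g : ℝ → Sp} (hg : IsGeodesicS g a b) {m : ℝ}
    (h1 : seg a b ≤ m) (h2 : m ≤ b.ρ) :
    trunc b m ∈ g '' Set.Icc 0 (dS a b) := by
  have hs0 := seg_nonneg_s5 a b
  have hsa := seg_le_left a b
  refine ⟨a.ρ + m - 2 * seg a b, ⟨by linarith, by rw [dS_def]; linarith⟩, ?_⟩
  rw [char_geodesic hg _ ⟨by linarith, by rw [dS_def]; linarith⟩, geo]
  split_ifs with h
  · have hm : m = seg a b := le_antisymm (by linarith) h1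
    rw [show a.ρ - (a.ρ + m - 2 * seg a b) = seg a b by rw [hm]; ring, trunc_seg, hm]
  · rw [show a.ρ + m - 2 * seg a b + 2 * seg a b - a.ρ = m by ring]


section Part2

variable {a b c : Sp} {g1 g2 : ℝ → Sp}

lemma step_max (hg1 : IsGeodesicS g1 a b) (hg2 : IsGeodesicS g2 b c)
    (himg : (g1 '' Set.Icc 0 (dS a b)) ∩ (g2 '' Set.Icc 0 (dS b c)) = {b}) :
    seg a b = b.ρ ∨ seg b c = b.ρ := by
  by_contra h
  push_neg at h
  obtain ⟨h1, h2⟩ := h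
  have h1' : seg a b < b.ρ := lt_of_le_of_ne (seg_le_right a b) h1
  have h2' : seg b c < b.ρ := lt_of_le_of_ne (seg_le_left b c) h2
  set m := max (seg a b) (seg b c) with hm
  have hmb : m < b.ρ := max_lt h1' h2'
  have hmem : trunc b m ∈ ({b} : Set Sp) := by
    rw [← himg]
    exact ⟨mem_image_right hg1 (le_max_left _ _) hmb.le,
      mem_image_left hg2 (le_max_right _ _) hmb.le⟩
  have : (trunc b m).ρ = b.ρ := congrArg Sp.ρ hmem
  rw [trunc_ρ (le_trans (seg_nonneg_s5 a b) (le_max_left _ _)) hmb.le] at this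
  exact absurd this hmb.ne

lemma step_X (hg1 : IsGeodesicS g1 a b) (hg2 : IsGeodesicS g2 b c)
    (himg : (g1 '' Set.Icc 0 (dS a b)) ∩ (g2 '' Set.Icc 0 (dS b c)) = {b})
    (hab : seg a b = b.ρ) (hbc : seg b c = b.ρ) : seg a c ≤ b.ρ := by
  by_contra h
  push_neg at h
  set m := (b.ρ + seg a c) / 2 with hmdef
  have hm1 : b.ρ < m := by rw [hmdef]; linarith
  have hm2 : m < seg a c := by rw [hmdef]; linarith
  have hmρa : m ≤ a.ρ := hm2.le.trans (seg_le_left a c)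
  have hmρc : m ≤ c.ρ := hm2.le.trans (seg_le_right a c)
  have hm0 : 0 ≤ m := le_trans b.ρ_nonneg hm1.le
  have hEc : trunc a m = trunc c m := by
    refine Sp.ext' (by rw [trunc_ρ hm0 hmρa, trunc_ρ hm0 hmρc]) ?_
    intro t
    rw [trunc_toFun hm0 hmρa, trunc_toFun hm0 hmρc]
    exact apply_eq_of_lt_seg (le_max_left _ _)
      (lt_of_le_of_lt (max_le hm0 (min_le_right _ _)) hm2)
  have hmem : trunc a m ∈ ({b} : Set Sp) := by
    rw [← himg]
    refine ⟨mem_image_left hg1 (hab ▸ hm1.le) hmρa, ?_⟩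
    rw [hEc]
    exact mem_image_right hg2 (hbc ▸ hm1.le) hmρc
  have : (trunc a m).ρ = b.ρ := congrArg Sp.ρ hmem
  rw [trunc_ρ hm0 hmρa] at this
  exact absurd this hm1.ne'

lemma caseA (hg1 : IsGeodesicS g1 a b) (hg2 : IsGeodesicS g2 b c)
    (himg : (g1 '' Set.Icc 0 (dS a b)) ∩ (g2 '' Set.Icc 0 (dS b c)) = {b})
    (hbc : seg b c = b.ρ) : seg a c = seg a b := by
  refine le_antisymm ?_ ?_
  · by_contra h
    push_neg at h
    rcases le_or_gt (seg a c) b.ρ with hle | hgt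
    · have hmem : seg a c ∈ segSet a b := by
        refine ⟨le_min (seg_le_left a c) hle, ?_⟩
        intro t' ht'
        rw [apply_eq_of_lt_seg ht'.1 ht'.2]
        exact (apply_eq_of_lt_seg ht'.1 (lt_of_lt_of_le ht'.2 (hle.trans_eq hbc.symm))).symm
      exact absurd ((seg_isGreatest a b).2 hmem) (not_le.2 h)
    · have hmem : b.ρ ∈ segSet a b := by
        refine ⟨le_min (hgt.le.trans (seg_le_left a c)) le_rfl, ?_⟩
        intro t' ht'
        rw [apply_eq_of_lt_seg ht'.1 (ht'.2.trans hgt)]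
        exact (apply_eq_of_lt_seg ht'.1 (ht'.2.trans_le hbc.symm.le)).symm
      have hab : seg a b = b.ρ :=
        le_antisymm (seg_le_right a b) ((seg_isGreatest a b).2 hmem)
      exact absurd (step_X hg1 hg2 himg hab hbc) (not_le.2 hgt)
  · refine (seg_isGreatest a c).2 ⟨le_min (seg_le_left a b)
      ((seg_le_right a b).trans (hbc ▸ seg_le_right b c)), ?_⟩
    intro t' ht'
    rw [apply_eq_of_lt_seg ht'.1 ht'.2]
    exact apply_eq_of_lt_seg ht'.1
      (lt_of_lt_of_le ht'.2 ((seg_le_right a b).trans_eq hbc.symm))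

lemma caseB (hg1 : IsGeodesicS g1 a b) (hg2 : IsGeodesicS g2 b c)
    (himg : (g1 '' Set.Icc 0 (dS a b)) ∩ (g2 '' Set.Icc 0 (dS b c)) = {b})
    (hab : seg a b = b.ρ) : seg a c = seg b c := by
  refine le_antisymm ?_ ?_
  · by_contra h
    push_neg at h
    rcases le_or_gt (seg a c) b.ρ with hle | hgt
    · have hmem : seg a c ∈ segSet b c := by
        refine ⟨le_min hle (seg_le_right a c), ?_⟩
        intro t' ht'
        rw [← apply_eq_of_lt_seg ht'.1 (lt_of_lt_of_le ht'.2 (hle.trans_eq hab.symm))]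
        exact apply_eq_of_lt_seg ht'.1 ht'.2
      exact absurd ((seg_isGreatest b c).2 hmem) (not_le.2 h)
    · have hmem : b.ρ ∈ segSet b c := by
        refine ⟨le_min le_rfl (hgt.le.trans (seg_le_right a c)), ?_⟩
        intro t' ht'
        rw [← apply_eq_of_lt_seg ht'.1 (ht'.2.trans_le hab.symm.le)]
        exact apply_eq_of_lt_seg ht'.1 (ht'.2.trans hgt)
      have hbc : seg b c = b.ρ :=
        le_antisymm (seg_le_left b c) ((seg_isGreatest b c).2 hmem)
      exact absurd (step_X hg1 hg2 himg hab hbc) (not_le.2 hgt)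
  · refine (seg_isGreatest a c).2 ⟨le_min
      ((seg_le_left b c).trans (hab ▸ seg_le_left a b)) (seg_le_right b c), ?_⟩
    intro t' ht'
    rw [apply_eq_of_lt_seg ht'.1
      (lt_of_lt_of_le ht'.2 ((seg_le_left b c).trans_eq hab.symm))]
    exact apply_eq_of_lt_seg ht'.1 ht'.2

lemma seg_ac (hg1 : IsGeodesicS g1 a b) (hg2 : IsGeodesicS g2 b c)
    (himg : (g1 '' Set.Icc 0 (dS a b)) ∩ (g2 '' Set.Icc 0 (dS b c)) = {b}) :
    seg a c = seg a b + seg b c - b.ρ := by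
  rcases step_max hg1 hg2 himg with h | h
  · rw [caseB hg1 hg2 himg h, h]; ring
  · rw [caseA hg1 hg2 himg h, h]; ring

lemma dS_ac (hg1 : IsGeodesicS g1 a b) (hg2 : IsGeodesicS g2 b c)
    (himg : (g1 '' Set.Icc 0 (dS a b)) ∩ (g2 '' Set.Icc 0 (dS b c)) = {b}) :
    dS a c = dS a b + dS b c := by
  rw [dS_def, dS_def, dS_def, seg_ac hg1 hg2 himg]
  ring


lemma glue_dist (hg1 : IsGeodesicS g1 a b) (hg2 : IsGeodesicS g2 b c)
    (himg : (g1 '' Set.Icc 0 (dS a b)) ∩ (g2 '' Set.Icc 0 (dS b c)) = {b}) :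
    ∀ x, 0 ≤ x → x ≤ dS a b → ∀ y, dS a b < y → y ≤ dS a b + dS b c →
    dS (g1 x) (g2 (y - dS a b)) = y - x := by
  intro x hx0 hx1 y hy0 hy1
  have hsac := seg_ac hg1 hg2 himg
  have hd1 : dS a b = a.ρ + b.ρ - 2 * seg a b := dS_def a b
  have hd2 : dS b c = b.ρ + c.ρ - 2 * seg b c := dS_def b c
  have hs1a := seg_le_left a b
  have hs1b := seg_le_right a b
  have hs10 := seg_nonneg_s5 a b
  have hs2b := seg_le_left b c
  have hs2c := seg_le_right b c
  have hs20 := seg_nonneg_s5 b c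
  rw [char_geodesic hg1 x ⟨hx0, hx1⟩,
    char_geodesic hg2 (y - dS a b) ⟨by linarith, by linarith⟩]
  rcases step_max hg1 hg2 himg with hab | hbc
  · -- seg a b = b.ρ
    rw [geo, if_pos (by linarith : x ≤ a.ρ - seg a b), geo]
    split_ifs with h2
    · rw [dS_trunc (by linarith) (by linarith) (by linarith) (by linarith),
        min_eq_left ((min_le_right _ _).trans (by linarith)),
        min_eq_right (by linarith)]
      linarith
    · push_neg at h2
      rw [dS_trunc (by linarith) (by linarith) (by linarith) (by linarith),
        min_eq_right (le_min (by linarith) (by linarith))]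
      linarith
  · -- seg b c = b.ρ
    rw [geo, geo,
      if_neg (show ¬ (y - dS a b ≤ b.ρ - seg b c) by simp only [not_le]; linarith)]
    split_ifs with h1
    · rw [dS_trunc (by linarith) (by linarith) (by linarith) (by linarith),
        min_eq_right (le_min (by linarith) (by linarith))]
      linarith
    · push_neg at h1
      rw [dS_trunc (by linarith) (by linarith) (by linarith) (by linarith),
        min_eq_left ((min_le_left _ _).trans (by linarith)),
        min_eq_left (by linarith)]
      linarith

end Part2

end SpAux


open SpAux in
/-- `S` is a real tree: every two points are joined by a unique
geodesic segment, and if geodesic segments `[a,b]`, `[b,c]` have exactly the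
point `b` in common then their concatenation is a geodesic segment `[a,c]`. -/
theorem Sp_is_real_tree :
    (∀ a b : Sp, ∃ g : ℝ → Sp, IsGeodesicS g a b ∧
      ∀ g' : ℝ → Sp, IsGeodesicS g' a b → Set.EqOn g g' (Set.Icc 0 (dS a b))) ∧
    (∀ a b c : Sp, ∀ g1 g2 : ℝ → Sp, IsGeodesicS g1 a b → IsGeodesicS g2 b c →
      (g1 '' Set.Icc 0 (dS a b)) ∩ (g2 '' Set.Icc 0 (dS b c)) = {b} →
      dS a c = dS a b + dS b c ∧
      IsGeodesicS (fun x => if x ≤ dS a b then g1 x else g2 (x - dS a b)) a c) := by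
  constructor
  · intro a b
    refine ⟨geo a b, geo_isGeodesic a b, ?_⟩
    intro g' hg' x hx
    exact (char_geodesic hg' x hx).symm
  · intro a b c g1 g2 hg1 hg2 himg
    have hD := dS_ac hg1 hg2 himg
    refine ⟨hD, ?_, ?_, ?_⟩
    · show (if (0:ℝ) ≤ dS a b then g1 0 else g2 (0 - dS a b)) = a
      rw [if_pos (dS_nonneg a b), hg1.1]
    · show (if dS a c ≤ dS a b then g1 (dS a c) else g2 (dS a c - dS a b)) = c
      rw [hD]
      by_cases h : dS a b + dS b c ≤ dS a b
      · have h2 : dS b c = 0 := le_antisymm (by linarith) (dS_nonneg b c)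
        have hcb : c = b := by rw [← hg2.2.1, h2, hg2.1]
        rw [if_pos h, show dS a b + dS b c = dS a b by rw [h2]; ring, hg1.2.1, hcb]
      · rw [if_neg h, show dS a b + dS b c - dS a b = dS b c by ring, hg2.2.1]
    · intro x hx y hy
      rw [hD] at hx hy
      show dS (if x ≤ dS a b then g1 x else g2 (x - dS a b))
        (if y ≤ dS a b then g1 y else g2 (y - dS a b)) = |x - y|
      split_ifs with h1 h2 h2
      · exact hg1.2.2 x ⟨hx.1, h1⟩ y ⟨hy.1, h2⟩
      · rw [glue_dist hg1 hg2 himg x hx.1 h1 y (lt_of_not_ge h2) hy.2,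
          abs_sub_comm, abs_of_nonneg (by linarith [lt_of_not_ge h2])]
      · rw [dS_comm_s5, glue_dist hg1 hg2 himg y hy.1 h2 x (lt_of_not_ge h1) hx.2,
          abs_of_nonneg (by linarith [lt_of_not_ge h1])]
      · have h1' := lt_of_not_ge h1
        have h2' := lt_of_not_ge h2
        rw [hg2.2.2 (x - dS a b) ⟨by linarith, by linarith [hx.2]⟩
            (y - dS a b) ⟨by linarith, by linarith [hy.2]⟩,
          show x - dS a b - (y - dS a b) = x - y by ring]
end
end

section
/- Every finite metric space (a1,...,an) arising as the vertex set of a finite real tree can be isometrically embedded into S by mapping vertices to piecewise-linear functions with strictly increasing slopes k1 < k2 < ... on successive branches. -/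
open Set Filter

noncomputable section

/-- A geodesic segment from `a` to `b` in a metric space. -/
def IsGeodesicSegment {X : Type*} [MetricSpace X] (g : ℝ → X) (a b : X) : Prop :=
  g 0 = a ∧ g (dist a b) = b ∧
  ∀ x ∈ Set.Icc 0 (dist a b), ∀ y ∈ Set.Icc 0 (dist a b), dist (g x) (g y) = |x - y|

/-- A real tree: unique geodesics, and the union of two geodesic segments
having exactly one endpoint in common is again a geodesic segment. -/
def IsRealTree (X : Type*) [MetricSpace X] : Prop :=
  (∀ a b : X, ∃ g : ℝ → X, IsGeodesicSegment g a b ∧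
    ∀ g' : ℝ → X, IsGeodesicSegment g' a b → Set.EqOn g g' (Set.Icc 0 (dist a b))) ∧
  (∀ a b c : X, ∀ g1 g2 : ℝ → X, IsGeodesicSegment g1 a b → IsGeodesicSegment g2 b c →
    (g1 '' Set.Icc 0 (dist a b)) ∩ (g2 '' Set.Icc 0 (dist b c)) = {b} →
    ∃ h : ℝ → X, IsGeodesicSegment h a c ∧
      h '' Set.Icc 0 (dist a c) =
        (g1 '' Set.Icc 0 (dist a b)) ∪ (g2 '' Set.Icc 0 (dist b c)))


lemma sum_two_pow_lt (S : Finset ℕ) (N : ℕ) (h : S ⊆ Finset.range N) :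
    ∑ j ∈ S, 2^j < 2^N := by
  have h1 : ∑ j ∈ S, 2^j ≤ ∑ j ∈ Finset.range N, 2^j :=
    Finset.sum_le_sum_of_subset h
  have h2 : ∀ n : ℕ, ∑ j ∈ Finset.range n, 2^j < 2^n := by
    intro n
    induction n with
    | zero => simp
    | succ n ih =>
      rw [Finset.sum_range_succ, pow_succ]
      omega
  exact lt_of_le_of_lt h1 (h2 N)

lemma sum_two_pow_injAux : ∀ N (S T : Finset ℕ), S ⊆ Finset.range N → T ⊆ Finset.range N →
    (∑ j ∈ S, 2^j) = (∑ j ∈ T, 2^j) → S = T := by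
  intro N
  induction N with
  | zero =>
    intro S T hS hT _
    simp only [Finset.range_zero, Finset.subset_empty] at hS hT
    rw [hS, hT]
  | succ N ih =>
    intro S T hS hT hsum
    have key : ∀ A B : Finset ℕ, A ⊆ Finset.range (N+1) → B ⊆ Finset.range (N+1) →
        (∑ j ∈ A, 2^j) = (∑ j ∈ B, 2^j) → N ∈ A → N ∈ B := by
      intro A B hA hB hs hNA
      by_contra hNB
      have hBsub : B ⊆ Finset.range N := by
        intro j hj
        have := hA; have hj' := hB hj
        simp only [Finset.mem_range] at hj' ⊢
        rcases Nat.lt_succ_iff_lt_or_eq.mp hj' with h | h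
        · exact h
        · exact absurd (h ▸ hj) hNB
      have h1 : (2:ℕ)^N ≤ ∑ j ∈ A, 2^j :=
        Finset.single_le_sum (fun i _ => Nat.zero_le _) hNA
      have h2 : ∑ j ∈ B, 2^j < 2^N := sum_two_pow_lt B N hBsub
      omega
    have hiff : N ∈ S ↔ N ∈ T :=
      ⟨key S T hS hT hsum, key T S hT hS hsum.symm⟩
    have hsub : ∀ A : Finset ℕ, A ⊆ Finset.range (N+1) → A.erase N ⊆ Finset.range N := by
      intro A hA j hj
      have h1 := Finset.mem_of_mem_erase hj
      have h2 := Finset.ne_of_mem_erase hj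
      have := hA h1
      simp only [Finset.mem_range] at this ⊢
      omega
    by_cases hN : N ∈ S
    · have hNT : N ∈ T := hiff.mp hN
      have e1 : 2^N + ∑ j ∈ S.erase N, 2^j = ∑ j ∈ S, 2^j := Finset.add_sum_erase _ _ hN
      have e2 : 2^N + ∑ j ∈ T.erase N, 2^j = ∑ j ∈ T, 2^j := Finset.add_sum_erase _ _ hNT
      have : (∑ j ∈ S.erase N, 2^j) = ∑ j ∈ T.erase N, 2^j := by omega
      have heq := ih (S.erase N) (T.erase N) (hsub S hS) (hsub T hT) this
      have : S = insert N (S.erase N) := (Finset.insert_erase hN).symm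
      rw [this, heq, Finset.insert_erase hNT]
    · have hNT : N ∉ T := fun h => hN (hiff.mpr h)
      have hS' : S ⊆ Finset.range N := by
        intro j hj
        have := hS hj
        simp only [Finset.mem_range] at this ⊢
        rcases Nat.lt_succ_iff_lt_or_eq.mp this with h | h
        · exact h
        · exact absurd (h ▸ hj) hN
      have hT' : T ⊆ Finset.range N := by
        intro j hj
        have := hT hj
        simp only [Finset.mem_range] at this ⊢
        rcases Nat.lt_succ_iff_lt_or_eq.mp this with h | h
        · exact h
        · exact absurd (h ▸ hj) hNT
      exact ih S T hS' hT' hsum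

lemma sum_two_pow_inj (S T : Finset ℕ)
    (h : (∑ j ∈ S, 2^j) = (∑ j ∈ T, 2^j)) : S = T := by
  set N := (S ∪ T).sup id + 1 with hN
  apply sum_two_pow_injAux N S T ?_ ?_ h
  · intro j hj
    simp only [Finset.mem_range, hN]
    have : j ≤ (S ∪ T).sup id := Finset.le_sup (f := id) (Finset.mem_union_left _ hj)
    omega
  · intro j hj
    simp only [Finset.mem_range, hN]
    have : j ≤ (S ∪ T).sup id := Finset.le_sup (f := id) (Finset.mem_union_right _ hj)
    omega

lemma sum_two_pow_real_inj {ι : Type*} (e : ι → ℕ) (he : Function.Injective e)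
    (T T' : Finset ι)
    (h : (∑ w ∈ T, (2:ℝ)^(e w)) = ∑ w ∈ T', (2:ℝ)^(e w)) : T = T' := by
  have cast1 : ∀ A : Finset ι, (∑ w ∈ A, (2:ℝ)^(e w)) = ((∑ w ∈ A, 2^(e w) : ℕ) : ℝ) := by
    intro A; push_cast; ring
  rw [cast1, cast1] at h
  have hnat : (∑ w ∈ T, 2^(e w)) = ∑ w ∈ T', 2^(e w) := Nat.cast_injective h
  have himg : ∀ A : Finset ι, (∑ w ∈ A, 2^(e w)) = ∑ j ∈ A.image e, 2^j := by
    intro A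
    rw [Finset.sum_image (fun x _ y _ hxy => he hxy)]
  rw [himg, himg] at hnat
  have := sum_two_pow_inj _ _ hnat
  ext w
  constructor
  · intro hw
    have : e w ∈ T'.image e := this ▸ Finset.mem_image_of_mem e hw
    obtain ⟨w', hw', hww⟩ := Finset.mem_image.mp this
    exact he hww ▸ hw'
  · intro hw
    have : e w ∈ T.image e := this.symm ▸ Finset.mem_image_of_mem e hw
    obtain ⟨w', hw', hww⟩ := Finset.mem_image.mp this
    exact he hww ▸ hw'

section Construction

variable {ι : Type*} [Fintype ι]

/-- clamp to `[0, r]` -/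
def clampTo (r t : ℝ) : ℝ := max 0 (min t r)

lemma clampTo_mem {r : ℝ} (t : ℝ) (hr : 0 ≤ r) : clampTo r t ∈ Icc 0 r := by
  constructor
  · exact le_max_left _ _
  · exact max_le hr (min_le_right _ _)

lemma clampTo_of_mem {r t : ℝ} (h : t ∈ Icc 0 r) : clampTo r t = t := by
  unfold clampTo
  rw [min_eq_left h.2, max_eq_right h.1]

/-- the embedding functions -/
def Ffun (e : ι → ℕ) (G : ι → ι → ℝ) (v : ι) (t : ℝ) : ℝ :=
  ∑ w : ι, (2:ℝ)^(e w) * (clampTo (G v v) t - min (G v w) (clampTo (G v v) t))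

variable (e : ι → ℕ) (G : ι → ι → ℝ)

lemma Ffun_continuous (v : ι) : Continuous (Ffun e G v) := by
  apply continuous_finset_sum
  intro w _
  have hc : Continuous (fun t => clampTo (G v v) t) :=
    Continuous.max continuous_const (Continuous.min continuous_id continuous_const)
  exact Continuous.mul continuous_const (Continuous.sub hc (Continuous.min continuous_const hc))

variable (hnn : ∀ u v : ι, 0 ≤ G u v)

include hnn in
lemma Ffun_zero (v : ι) : Ffun e G v 0 = 0 := by
  apply Finset.sum_eq_zero
  intro w _
  have h0 : clampTo (G v v) 0 = 0 := clampTo_of_mem ⟨le_refl _, hnn v v⟩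
  rw [h0, min_eq_right (hnn v w)]
  ring

include hnn in
lemma Ffun_clamp (v : ι) (t : ℝ) : Ffun e G v t = Ffun e G v (max 0 (min t (G v v))) := by
  have : clampTo (G v v) (max 0 (min t (G v v))) = clampTo (G v v) t :=
    clampTo_of_mem (clampTo_mem t (hnn v v))
  unfold Ffun
  rw [this]

/-- the Sp element -/
def phiF (v : ι) : Sp where
  ρ := G v v
  toFun := Ffun e G v
  ρ_nonneg := hnn v v
  contOn := (Ffun_continuous e G v).continuousOn
  zero_at_zero := Ffun_zero e G hnn v
  eq_clamp := Ffun_clamp e G hnn v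

variable (hsym : ∀ u v : ι, G u v = G v u)
    (hle : ∀ u v : ι, G u v ≤ G u u)
    (hgr : ∀ u v w : ι, min (G u w) (G w v) ≤ G u v)

include hsym hgr in
lemma key1 (u v w : ι) : min (G u w) (G u v) = min (G v w) (G u v) := by
  have h2 : min (G u v) (G v w) ≤ G u w := hgr u w v
  have h3 : min (G u v) (G u w) ≤ G v w := by
    have := hgr v w u
    rwa [hsym v u] at this
  rw [min_comm (G u v)] at h2 h3
  exact le_antisymm (le_min h3 (min_le_right _ _)) (le_min h2 (min_le_right _ _))

include hsym hle hgr in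
lemma Ffun_agree (u v : ι) (t : ℝ) (h0 : 0 ≤ t) (hts : t ≤ G u v) :
    Ffun e G u t = Ffun e G v t := by
  have hcu : clampTo (G u u) t = t := clampTo_of_mem ⟨h0, le_trans hts (hle u v)⟩
  have hcv : clampTo (G v v) t = t := by
    apply clampTo_of_mem
    refine ⟨h0, le_trans hts ?_⟩
    rw [hsym u v]; exact hle v u
  unfold Ffun
  rw [hcu, hcv]
  apply Finset.sum_congr rfl
  intro w _
  have hk : min (G u w) (G u v) = min (G v w) (G u v) := key1 G hsym hgr u v w
  have e1 : min (G u w) t = min (G v w) t := by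
    have hst : min (G u v) t = t := min_eq_right hts
    calc min (G u w) t = min (G u w) (min (G u v) t) := by rw [hst]
      _ = min (min (G u w) (G u v)) t := (min_assoc _ _ _).symm
      _ = min (min (G v w) (G u v)) t := by rw [hk]
      _ = min (G v w) (min (G u v) t) := min_assoc _ _ _
      _ = min (G v w) t := by rw [hst]
  rw [e1]

include hsym hgr hnn in
lemma Ffun_diff (he : Function.Injective e) (u v : ι) (t : ℝ)
    (hst : G u v < t) (htu : t ≤ G u u) (htv : t ≤ G v v)
    (hu : ∀ w, G u v < G u w → t ≤ G u w)
    (hv : ∀ w, G u v < G v w → t ≤ G v w) :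
    Ffun e G u t ≠ Ffun e G v t := by
  classical
  set s := G u v with hs
  have h0t : 0 ≤ t := le_trans (hnn u v) hst.le
  have hcu : clampTo (G u u) t = t := clampTo_of_mem ⟨h0t, htu⟩
  have hcv : clampTo (G v v) t = t := clampTo_of_mem ⟨h0t, htv⟩
  have key : ∀ w, min (G u w) s = min (G v w) s := fun w => key1 G hsym hgr u v w
  set T : Finset ι := Finset.univ.filter (fun w => s < G u w) with hT
  set T' : Finset ι := Finset.univ.filter (fun w => s < G v w) with hT'
  have hterm : ∀ w ∈ (Finset.univ : Finset ι),
      (2:ℝ)^(e w) * (t - min (G u w) t) - (2:ℝ)^(e w) * (t - min (G v w) t)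
      = (if s < G v w then (t-s) * 2^(e w) else 0)
        - (if s < G u w then (t-s) * 2^(e w) else 0) := by
    intro w _
    by_cases h1 : s < G u w
    · have hvw : G v w = s := by
        have hk := key w
        rw [min_eq_right h1.le] at hk
        have h1' : s ≤ G v w := by
          by_contra hcon
          push_neg at hcon
          rw [min_eq_left hcon.le] at hk
          exact absurd hk (ne_of_gt hcon)
        have h2' : G v w ≤ s := by
          have := hgr u v w
          rw [hsym w v] at this
          rcases min_cases (G u w) (G v w) with ⟨hm, _⟩ | ⟨hm, hmle⟩
          · rw [hm] at this; exact absurd (lt_of_lt_of_le h1 this) (lt_irrefl s)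
          · rw [hm] at this; exact this
        exact le_antisymm h2' h1'
      have h2 : ¬ s < G v w := by rw [hvw]; exact lt_irrefl s
      rw [if_pos h1, if_neg h2, min_eq_right (hu w h1), min_eq_left (hvw ▸ hst.le : G v w ≤ t), hvw]
      ring
    · by_cases h2 : s < G v w
      · have huw : G u w = s := by
          have hk := key w
          rw [min_eq_right h2.le] at hk
          have h1' : s ≤ G u w := by
            by_contra hcon
            push_neg at hcon
            rw [min_eq_left hcon.le] at hk
            exact absurd hk.symm (ne_of_gt hcon)
          exact le_antisymm (not_lt.mp h1) h1'
        rw [if_pos h2, if_neg h1, min_eq_right (hv w h2), min_eq_left (huw ▸ hst.le : G u w ≤ t), huw]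
        ring
      · push_neg at h1 h2
        have heqw : G u w = G v w := by
          have hk := key w
          rwa [min_eq_left h1, min_eq_left h2] at hk
        rw [if_neg (not_lt.mpr h1), if_neg (not_lt.mpr h2), heqw]
        ring
  have hdiff : Ffun e G u t - Ffun e G v t
      = (t - s) * ((∑ w ∈ T', (2:ℝ)^(e w)) - ∑ w ∈ T, (2:ℝ)^(e w)) := by
    unfold Ffun
    rw [hcu, hcv, ← Finset.sum_sub_distrib]
    rw [Finset.sum_congr rfl hterm, Finset.sum_sub_distrib]
    rw [← Finset.sum_filter, ← Finset.sum_filter, ← hT, ← hT',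
      ← Finset.mul_sum, ← Finset.mul_sum]
    ring
  intro hcon
  rw [hcon, sub_self] at hdiff
  have hts : t - s ≠ 0 := by linarith
  have hsum : (∑ w ∈ T', (2:ℝ)^(e w)) = ∑ w ∈ T, (2:ℝ)^(e w) := by
    rcases mul_eq_zero.mp hdiff.symm with h | h
    · exact absurd h hts
    · linarith [sub_eq_zero.mp h]
  have hTT : T' = T := sum_two_pow_real_inj e he T' T hsum
  have hvT' : v ∈ T' := by
    rw [hT', Finset.mem_filter]
    exact ⟨Finset.mem_univ v, lt_of_lt_of_le hst htv⟩
  have hvT : v ∉ T := by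
    rw [hT, Finset.mem_filter]
    intro h
    exact absurd h.2 (lt_irrefl s)
  exact hvT (hTT ▸ hvT')

include hsym hle hgr hnn in
lemma seg_phiF (he : Function.Injective e) (u v : ι) :
    seg (phiF e G hnn u) (phiF e G hnn v) = G u v := by
  classical
  have hne : Nonempty ι := ⟨u⟩
  set s := G u v with hs
  set A : Set ℝ := {t | t ≤ min (G u u) (G v v) ∧
      ∀ t' ∈ Set.Ico (0:ℝ) t, Ffun e G u t' = Ffun e G v t'} with hA
  have hseg : seg (phiF e G hnn u) (phiF e G hnn v) = sSup A := rfl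
  have hsmem : s ∈ A := by
    constructor
    · exact le_min (hle u v) (by rw [hs, hsym u v]; exact hle v u)
    · intro t' ht'
      exact Ffun_agree e G hsym hle hgr u v t' ht'.1 ht'.2.le
  have hub : ∀ t ∈ A, t ≤ s := by
    intro t ht
    by_contra hc
    push_neg at hc
    set b := min t (Finset.univ.inf' Finset.univ_nonempty
      (fun w => min (if s < G u w then G u w else t) (if s < G v w then G v w else t))) with hb
    have hsb : s < b := by
      apply lt_min hc
      rw [Finset.lt_inf'_iff]
      intro w _
      apply lt_min
      · split
        · assumption
        · exact hc
      · split
        · assumption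
        · exact hc
    set t0 := (s + b)/2 with ht0
    have h1 : s < t0 := by rw [ht0]; linarith
    have h2 : t0 < b := by rw [ht0]; linarith
    have hbt : b ≤ t := min_le_left _ _
    have ht0t : t0 < t := lt_of_lt_of_le h2 hbt
    have htuu : t0 ≤ G u u := le_trans ht0t.le (le_trans ht.1 (min_le_left _ _))
    have htvv : t0 ≤ G v v := le_trans ht0t.le (le_trans ht.1 (min_le_right _ _))
    have hinfle : ∀ w, b ≤ min (if s < G u w then G u w else t) (if s < G v w then G v w else t) := by
      intro w
      exact le_trans (min_le_right _ _) (Finset.inf'_le _ (Finset.mem_univ w))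
    have hu' : ∀ w, s < G u w → t0 ≤ G u w := by
      intro w hw
      have := le_trans (hinfle w) (min_le_left _ _)
      rw [if_pos hw] at this
      exact le_trans h2.le this
    have hv' : ∀ w, s < G v w → t0 ≤ G v w := by
      intro w hw
      have := le_trans (hinfle w) (min_le_right _ _)
      rw [if_pos hw] at this
      exact le_trans h2.le this
    have hneq := Ffun_diff e G hnn hsym hgr he u v t0 h1 htuu htvv hu' hv'
    have h0t0 : 0 ≤ t0 := le_trans (hnn u v) h1.le
    exact hneq (ht.2 t0 ⟨h0t0, ht0t⟩)
  rw [hseg]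
  apply le_antisymm
  · exact csSup_le ⟨s, hsmem⟩ hub
  · exact le_csSup ⟨min (G u u) (G v v), fun x hx => hx.1⟩ hsmem

include hsym hle hgr hnn in
lemma exists_phi (he : Function.Injective e) :
    ∃ φ : ι → Sp, ∀ u v : ι, dS (φ u) (φ v) = (G u u - G u v) + (G v v - G u v) := by
  refine ⟨phiF e G hnn, fun u v => ?_⟩
  unfold dS
  rw [seg_phiF e G hnn hsym hle hgr he u v]
  rfl

end Construction

section Tree

variable {X : Type*} [MetricSpace X]

lemma geo_dist_left {g : ℝ → X} {a b : X} (h : IsGeodesicSegment g a b)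
    {t : ℝ} (ht : t ∈ Icc 0 (dist a b)) : dist a (g t) = t := by
  have h0 : (0:ℝ) ∈ Icc 0 (dist a b) := ⟨le_refl _, dist_nonneg⟩
  have key := h.2.2 0 h0 t ht
  rw [h.1] at key
  rw [key, abs_sub_comm, sub_zero, abs_of_nonneg ht.1]

lemma geo_restrict {g : ℝ → X} {a b : X} (h : IsGeodesicSegment g a b)
    {t : ℝ} (ht : t ∈ Icc 0 (dist a b)) : IsGeodesicSegment g a (g t) := by
  have hd : dist a (g t) = t := geo_dist_left h ht
  refine ⟨h.1, by rw [hd], ?_⟩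
  rw [hd]
  intro x hx y hy
  exact h.2.2 x ⟨hx.1, le_trans hx.2 ht.2⟩ y ⟨hy.1, le_trans hy.2 ht.2⟩

lemma geo_unique (hX : IsRealTree X) {a b : X} {g g' : ℝ → X}
    (h : IsGeodesicSegment g a b) (h' : IsGeodesicSegment g' a b) :
    EqOn g g' (Icc 0 (dist a b)) := by
  obtain ⟨g0, _, hu⟩ := hX.1 a b
  intro t ht
  rw [← hu g h ht, hu g' h' ht]

variable (hX : IsRealTree X) (p : X)

def geo (x : X) : ℝ → X := (hX.1 p x).choose

lemma geo_spec (x : X) : IsGeodesicSegment (geo hX p x) p x := (hX.1 p x).choose_spec.1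

def Aset (x y : X) : Set ℝ :=
  {t | t ∈ Icc 0 (min (dist p x) (dist p y)) ∧ geo hX p x t = geo hX p y t}

lemma Aset_zero (x y : X) : (0:ℝ) ∈ Aset hX p x y :=
  ⟨⟨le_refl _, le_min dist_nonneg dist_nonneg⟩,
    by rw [(geo_spec hX p x).1, (geo_spec hX p y).1]⟩

lemma Aset_bdd (x y : X) : BddAbove (Aset hX p x y) :=
  ⟨min (dist p x) (dist p y), fun _ ht => ht.1.2⟩

lemma sSup_mem_Aset (x y : X) : sSup (Aset hX p x y) ∈ Aset hX p x y := by
  set s := sSup (Aset hX p x y) with hsdef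
  have hs0 : 0 ≤ s := le_csSup (Aset_bdd hX p x y) (Aset_zero hX p x y)
  have hsmin : s ≤ min (dist p x) (dist p y) :=
    csSup_le ⟨0, Aset_zero hX p x y⟩ (fun t ht => ht.1.2)
  refine ⟨⟨hs0, hsmin⟩, ?_⟩
  have heps : ∀ ε > (0:ℝ), dist (geo hX p x s) (geo hX p y s) ≤ ε := by
    intro ε hε
    obtain ⟨t, htA, hts⟩ := exists_lt_of_lt_csSup ⟨0, Aset_zero hX p x y⟩
      (show s - ε/2 < s by linarith)
    have hts' : t ≤ s := le_csSup (Aset_bdd hX p x y) htA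
    have hx1 : s ∈ Icc 0 (dist p x) := ⟨hs0, le_trans hsmin (min_le_left _ _)⟩
    have hx2 : t ∈ Icc 0 (dist p x) := ⟨htA.1.1, le_trans htA.1.2 (min_le_left _ _)⟩
    have hy1 : s ∈ Icc 0 (dist p y) := ⟨hs0, le_trans hsmin (min_le_right _ _)⟩
    have hy2 : t ∈ Icc 0 (dist p y) := ⟨htA.1.1, le_trans htA.1.2 (min_le_right _ _)⟩
    have e1 : dist (geo hX p x s) (geo hX p x t) = |s - t| :=
      (geo_spec hX p x).2.2 s hx1 t hx2
    have e2 : dist (geo hX p y t) (geo hX p y s) = |t - s| :=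
      (geo_spec hX p y).2.2 t hy2 s hy1
    calc dist (geo hX p x s) (geo hX p y s)
        ≤ dist (geo hX p x s) (geo hX p x t) + dist (geo hX p x t) (geo hX p y s) :=
          dist_triangle _ _ _
      _ = |s - t| + dist (geo hX p y t) (geo hX p y s) := by rw [e1, htA.2]
      _ = |s - t| + |t - s| := by rw [e2]
      _ ≤ ε := by
          rw [abs_of_nonneg (by linarith), abs_of_nonpos (by linarith)]
          linarith
  have hzero : dist (geo hX p x s) (geo hX p y s) ≤ 0 := by
    by_contra hcon
    push_neg at hcon
    have := heps (dist (geo hX p x s) (geo hX p y s) / 2) (by linarith)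
    linarith
  exact dist_le_zero.mp hzero

lemma agree_below (x y : X) {t : ℝ} (ht : t ∈ Aset hX p x y) {r : ℝ}
    (hr0 : 0 ≤ r) (hrt : r ≤ t) : geo hX p x r = geo hX p y r := by
  have htx : t ∈ Icc 0 (dist p x) := ⟨ht.1.1, le_trans ht.1.2 (min_le_left _ _)⟩
  have hty : t ∈ Icc 0 (dist p y) := ⟨ht.1.1, le_trans ht.1.2 (min_le_right _ _)⟩
  have hq : dist p (geo hX p x t) = t := geo_dist_left (geo_spec hX p x) htx
  have hgx : IsGeodesicSegment (geo hX p x) p (geo hX p x t) :=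
    geo_restrict (geo_spec hX p x) htx
  have hgy : IsGeodesicSegment (geo hX p y) p (geo hX p x t) := by
    rw [ht.2]
    exact geo_restrict (geo_spec hX p y) hty
  have := geo_unique hX hgx hgy
  apply this
  rw [hq]
  exact ⟨hr0, hrt⟩

lemma dist_eq_tree (x y : X) :
    dist x y = (dist p x - sSup (Aset hX p x y)) + (dist p y - sSup (Aset hX p x y)) := by
  set s := sSup (Aset hX p x y) with hsdef
  have hsA := sSup_mem_Aset hX p x y
  have hs0 : 0 ≤ s := hsA.1.1
  have hsx : s ≤ dist p x := le_trans hsA.1.2 (min_le_left _ _)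
  have hsy : s ≤ dist p y := le_trans hsA.1.2 (min_le_right _ _)
  have hgx := geo_spec hX p x
  have hgy := geo_spec hX p y
  set m := (geo hX p x) s with hm
  have hmy : (geo hX p y) s = m := hsA.2.symm
  have dxm : dist x m = dist p x - s := by
    have key := hgx.2.2 (dist p x) ⟨dist_nonneg, le_refl _⟩ s ⟨hs0, hsx⟩
    rw [hgx.2.1] at key
    rw [key, abs_of_nonneg (by linarith)]
  have dmy : dist m y = dist p y - s := by
    have key := hgy.2.2 s ⟨hs0, hsy⟩ (dist p y) ⟨dist_nonneg, le_refl _⟩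
    rw [hgy.2.1, hmy] at key
    rw [key, abs_of_nonpos (by linarith), neg_sub]
  set g1 : ℝ → X := fun r => (geo hX p x) (dist p x - r) with hg1def
  set g2 : ℝ → X := fun r => (geo hX p y) (s + r) with hg2def
  have hg1 : IsGeodesicSegment g1 x m := by
    refine ⟨?_, ?_, ?_⟩
    · show (geo hX p x) (dist p x - 0) = x
      rw [sub_zero, hgx.2.1]
    · show (geo hX p x) (dist p x - dist x m) = m
      rw [dxm]
      have harg : dist p x - (dist p x - s) = s := by ring
      rw [harg]
    · intro a ha b hb
      rw [dxm] at ha hb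
      have key := hgx.2.2 (dist p x - a) ⟨by linarith [ha.2], by linarith [ha.1]⟩
        (dist p x - b) ⟨by linarith [hb.2], by linarith [hb.1]⟩
      show dist ((geo hX p x) (dist p x - a)) ((geo hX p x) (dist p x - b)) = |a - b|
      have harg : (dist p x - a) - (dist p x - b) = b - a := by ring
      rw [key, harg, abs_sub_comm]
  have hg2 : IsGeodesicSegment g2 m y := by
    refine ⟨?_, ?_, ?_⟩
    · show (geo hX p y) (s + 0) = m
      rw [add_zero, hmy]
    · show (geo hX p y) (s + dist m y) = y
      rw [dmy]
      have harg : s + (dist p y - s) = dist p y := by ring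
      rw [harg, hgy.2.1]
    · intro a ha b hb
      rw [dmy] at ha hb
      have key := hgy.2.2 (s + a) ⟨by linarith [ha.1], by linarith [ha.2]⟩
        (s + b) ⟨by linarith [hb.1], by linarith [hb.2]⟩
      show dist ((geo hX p y) (s + a)) ((geo hX p y) (s + b)) = |a - b|
      have harg : (s + a) - (s + b) = a - b := by ring
      rw [key, harg]
  have hinter : (g1 '' Icc 0 (dist x m)) ∩ (g2 '' Icc 0 (dist m y)) = {m} := by
    apply Set.Subset.antisymm
    · rintro q ⟨⟨r1, hr1, he1⟩, ⟨r2, hr2, he2⟩⟩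
      rw [dxm] at hr1
      rw [dmy] at hr2
      have ht1mem : dist p x - r1 ∈ Icc 0 (dist p x) :=
        ⟨by linarith [hr1.2], by linarith [hr1.1]⟩
      have hd1 : dist p q = dist p x - r1 := by
        rw [← he1]; exact geo_dist_left hgx ht1mem
      have ht2mem : s + r2 ∈ Icc 0 (dist p y) :=
        ⟨by linarith [hr2.1], by linarith [hr2.2]⟩
      have hd2 : dist p q = s + r2 := by
        rw [← he2]; exact geo_dist_left hgy ht2mem
      have ht12 : dist p x - r1 = s + r2 := by rw [← hd1, hd2]
      have ht1A : dist p x - r1 ∈ Aset hX p x y := by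
        refine ⟨⟨ht1mem.1, le_min ht1mem.2 ?_⟩, ?_⟩
        · rw [ht12]; exact ht2mem.2
        · show (geo hX p x) (dist p x - r1) = (geo hX p y) (dist p x - r1)
          calc (geo hX p x) (dist p x - r1) = q := he1
            _ = (geo hX p y) (s + r2) := he2.symm
            _ = (geo hX p y) (dist p x - r1) := by rw [← ht12]
      have hles : dist p x - r1 ≤ s := le_csSup (Aset_bdd hX p x y) ht1A
      have hges : s ≤ dist p x - r1 := by linarith [hr1.2]
      have heq : dist p x - r1 = s := le_antisymm hles hges
      show q ∈ ({m} : Set X)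
      rw [Set.mem_singleton_iff, ← he1]
      show (geo hX p x) (dist p x - r1) = m
      rw [heq]
    · rintro q hq
      rw [Set.mem_singleton_iff] at hq
      subst hq
      constructor
      · exact ⟨dist x m, ⟨dist_nonneg, le_refl _⟩, hg1.2.1⟩
      · exact ⟨0, ⟨le_refl _, dist_nonneg⟩, by show (geo hX p y) (s + 0) = m; rw [add_zero]; exact hmy⟩
  obtain ⟨h, hh, himg⟩ := hX.2 x m y g1 g2 hg1 hg2 hinter
  have hmimg : m ∈ h '' Icc 0 (dist x y) := by
    rw [himg]
    exact Or.inr ⟨0, ⟨le_refl _, dist_nonneg⟩, by show (geo hX p y) (s + 0) = m; rw [add_zero]; exact hmy⟩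
  obtain ⟨t0, ht0, hht0⟩ := hmimg
  have e1 : dist x m = t0 := by
    have key := hh.2.2 0 ⟨le_refl _, dist_nonneg⟩ t0 ht0
    rw [hh.1, hht0] at key
    rw [key, abs_sub_comm, sub_zero, abs_of_nonneg ht0.1]
  have e2 : dist m y = dist x y - t0 := by
    have key := hh.2.2 t0 ht0 (dist x y) ⟨dist_nonneg, le_refl _⟩
    rw [hh.2.1, hht0] at key
    rw [key, abs_of_nonpos (by linarith [ht0.2]), neg_sub]
  linarith [dxm, dmy, e1, e2]

include hX in
lemma tree_gromov (x y z : X) :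
    min ((dist p x + dist p y - dist x y)/2) ((dist p y + dist p z - dist y z)/2)
      ≤ (dist p x + dist p z - dist x z)/2 := by
  have hxy := dist_eq_tree hX p x y
  have hyz := dist_eq_tree hX p y z
  have hxz := dist_eq_tree hX p x z
  have hr : min (sSup (Aset hX p x y)) (sSup (Aset hX p y z)) ≤ sSup (Aset hX p x z) := by
    have hxyA := sSup_mem_Aset hX p x y
    have hyzA := sSup_mem_Aset hX p y z
    have hr0 : (0:ℝ) ≤ min (sSup (Aset hX p x y)) (sSup (Aset hX p y z)) :=
      le_min hxyA.1.1 hyzA.1.1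
    have h1 : geo hX p x (min (sSup (Aset hX p x y)) (sSup (Aset hX p y z)))
        = geo hX p y (min (sSup (Aset hX p x y)) (sSup (Aset hX p y z))) :=
      agree_below hX p x y hxyA hr0 (min_le_left _ _)
    have h2 : geo hX p y (min (sSup (Aset hX p x y)) (sSup (Aset hX p y z)))
        = geo hX p z (min (sSup (Aset hX p x y)) (sSup (Aset hX p y z))) :=
      agree_below hX p y z hyzA hr0 (min_le_right _ _)
    apply le_csSup (Aset_bdd hX p x z)
    refine ⟨⟨hr0, le_min ?_ ?_⟩, h1.trans h2⟩
    · exact le_trans (min_le_left _ _) (le_trans hxyA.1.2 (min_le_left _ _))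
    · exact le_trans (min_le_right _ _) (le_trans hyzA.1.2 (min_le_right _ _))
  have exy : (dist p x + dist p y - dist x y)/2 = sSup (Aset hX p x y) := by linarith
  have eyz : (dist p y + dist p z - dist y z)/2 = sSup (Aset hX p y z) := by linarith
  have exz : (dist p x + dist p z - dist x z)/2 = sSup (Aset hX p x z) := by linarith
  rw [exy, eyz, exz]
  exact hr

end Tree

/-- every finite metric space arising as the vertex set of a
(finite) real tree embeds isometrically into `S`. -/
theorem finite_tree_embeds (X : Type*) [MetricSpace X] (hX : IsRealTree X)
    (V : Finset X) :
    ∃ φ : V → Sp, ∀ u v : V, dS (φ u) (φ v) = dist (u : X) (v : X) := by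
  classical
  rcases V.eq_empty_or_nonempty with hV | hV
  · subst hV
    exact ⟨fun v => (Finset.notMem_empty _ v.2).elim, fun u => (Finset.notMem_empty _ u.2).elim⟩
  · obtain ⟨p, _⟩ := hV
    set G : V → V → ℝ := fun u v => (dist p (u:X) + dist p (v:X) - dist (u:X) (v:X))/2 with hG
    have hnn : ∀ u v : V, 0 ≤ G u v := by
      intro u v
      have h := dist_triangle (↑u : X) p ↑v
      rw [dist_comm (↑u:X) p] at h
      simp only [hG]
      linarith
    have hsym : ∀ u v : V, G u v = G v u := by
      intro u v
      simp only [hG]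
      rw [dist_comm (↑u:X) ↑v]
      ring
    have hle : ∀ u v : V, G u v ≤ G u u := by
      intro u v
      have h := dist_triangle p (↑u:X) ↑v
      simp only [hG, dist_self]
      linarith
    have hgr : ∀ u v w : V, min (G u w) (G w v) ≤ G u v := by
      intro u v w
      have h := tree_gromov hX p (↑u:X) (↑w:X) (↑v:X)
      simp only [hG]
      exact h
    set e : V → ℕ := fun v => ((Fintype.equivFin V) v : ℕ) with he'
    have he : Function.Injective e := fun a b hab =>
      (Fintype.equivFin V).injective (Fin.val_injective hab)
    obtain ⟨φ, hφ⟩ := exists_phi e G hnn hsym hle hgr he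
    refine ⟨φ, fun u v => ?_⟩
    rw [hφ u v]
    simp only [hG, dist_self]
    ring
end
end

section
/- Any real tree with countably many vertices admits an isometric embedding into S; i.e., S is a thick real tree. -/
open Set Filter

noncomputable section

section TreeGeometry

variable {X : Type*} [MetricSpace X]

lemma geo_dist_left_s7 {g : ℝ → X} {u v : X} (hg : IsGeodesicSegment g u v)
    {r : ℝ} (hr : r ∈ Set.Icc 0 (dist u v)) : dist u (g r) = r := by
  have h := hg.2.2 0 ⟨le_refl 0, dist_nonneg⟩ r hr
  rw [hg.1] at h
  rw [h, abs_of_nonpos (by linarith [hr.1])]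
  linarith [hr.1]

lemma geo_dist_right {g : ℝ → X} {u v : X} (hg : IsGeodesicSegment g u v)
    {r : ℝ} (hr : r ∈ Set.Icc 0 (dist u v)) : dist (g r) v = dist u v - r := by
  have h := hg.2.2 r hr (dist u v) ⟨dist_nonneg, le_refl _⟩
  rw [hg.2.1] at h
  rw [h, abs_of_nonpos (by linarith [hr.2])]
  linarith

/-- membership in the image of a geodesic implies metric betweenness -/
lemma mem_image_between {g : ℝ → X} {u v x : X} (hg : IsGeodesicSegment g u v)
    (hx : x ∈ g '' Set.Icc 0 (dist u v)) : dist u x + dist x v = dist u v := by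
  obtain ⟨r, hr, rfl⟩ := hx
  rw [geo_dist_left_s7 hg hr, geo_dist_right hg hr]
  ring

/-- a geodesic is continuous (Lipschitz) on the relevant interval -/
lemma geo_continuousOn {g : ℝ → X} {u v : X} (hg : IsGeodesicSegment g u v) :
    ContinuousOn g (Set.Icc 0 (dist u v)) := by
  have : LipschitzOnWith 1 g (Set.Icc 0 (dist u v)) := by
    rw [lipschitzOnWith_iff_dist_le_mul]
    intro x hx y hy
    rw [hg.2.2 x hx y hy, Real.dist_eq]
    simp
  exact this.continuousOn

/-- metric betweenness implies membership in the image of any geodesic -/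
lemma between_mem_image (hX : IsRealTree X) {u v x : X}
    (hx : dist u x + dist x v = dist u v) {g : ℝ → X} (hg : IsGeodesicSegment g u v) :
    x ∈ g '' Set.Icc 0 (dist u v) := by
  obtain ⟨g1, hg1, -⟩ := hX.1 u x
  obtain ⟨g2, hg2, -⟩ := hX.1 x v
  have hinter : (g1 '' Set.Icc 0 (dist u x)) ∩ (g2 '' Set.Icc 0 (dist x v)) = {x} := by
    apply Set.eq_singleton_iff_unique_mem.2
    constructor
    · exact ⟨⟨dist u x, ⟨dist_nonneg, le_refl _⟩, hg1.2.1⟩,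
        ⟨0, ⟨le_refl 0, dist_nonneg⟩, hg2.1⟩⟩
    · rintro p ⟨⟨s, hs, rfl⟩, hp2⟩
      obtain ⟨s', hs', hps'⟩ := hp2
      have h1 : dist u (g1 s) = s := geo_dist_left_s7 hg1 hs
      have h2 : dist (g1 s) x = dist u x - s := geo_dist_right hg1 hs
      have h3 : dist x (g1 s) = s' := by rw [← hps']; exact geo_dist_left_s7 hg2 hs'
      have h4 : dist (g1 s) v = dist x v - s' := by rw [← hps']; exact geo_dist_right hg2 hs'
      have htri : dist u v ≤ dist u (g1 s) + dist (g1 s) v := dist_triangle _ _ _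
      have h5 : dist (g1 s) x = s' := by rw [dist_comm] at h3; exact h3
      have hs_eq : s = dist u x := by
        have := hs.2
        nlinarith [hs.1, hs'.1]
      have : dist (g1 s) x = 0 := by rw [h2, hs_eq]; ring
      have := dist_eq_zero.1 this
      exact this
  obtain ⟨h, hh, himg⟩ := hX.2 u x v g1 g2 hg1 hg2 hinter
  have hxh : x ∈ h '' Set.Icc 0 (dist u v) := by
    rw [himg]
    exact Or.inl ⟨dist u x, ⟨dist_nonneg, le_refl _⟩, hg1.2.1⟩
  obtain ⟨g0, hg0, huniq⟩ := hX.1 u v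
  have e1 : g0 '' Set.Icc 0 (dist u v) = h '' Set.Icc 0 (dist u v) :=
    Set.EqOn.image_eq (huniq h hh)
  have e2 : g0 '' Set.Icc 0 (dist u v) = g '' Set.Icc 0 (dist u v) :=
    Set.EqOn.image_eq (huniq g hg)
  rw [← e2, e1]
  exact hxh

/-- two points between `u` and `v` are at distance `|d(u,p) - d(u,q)|` -/
lemma between_dist (hX : IsRealTree X) {u v p q : X}
    (hp : dist u p + dist p v = dist u v) (hq : dist u q + dist q v = dist u v) :
    dist p q = |dist u p - dist u q| := by
  obtain ⟨g, hg, -⟩ := hX.1 u v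
  obtain ⟨s, hs, hps⟩ := between_mem_image hX hp hg
  obtain ⟨s', hs', hqs⟩ := between_mem_image hX hq hg
  have h1 : dist u p = s := by rw [← hps]; exact geo_dist_left_s7 hg hs
  have h2 : dist u q = s' := by rw [← hqs]; exact geo_dist_left_s7 hg hs'
  rw [h1, h2, ← hps, ← hqs]
  exact hg.2.2 s hs s' hs'

/-- median point of a triple in a real tree -/
lemma exists_median (hX : IsRealTree X) (o u v : X) :
    ∃ m : X, dist u m + dist m v = dist u v ∧ dist o m + dist m u = dist o u ∧
      dist o m + dist m v = dist o v := by
  obtain ⟨g, hg, -⟩ := hX.1 u v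
  set K := g '' Set.Icc 0 (dist u v) with hK
  have hKc : IsCompact K := (isCompact_Icc).image_of_continuousOn (geo_continuousOn hg)
  have hKne : K.Nonempty := ⟨u, 0, ⟨le_refl 0, dist_nonneg⟩, hg.1⟩
  obtain ⟨m, hmK, hmin⟩ := hKc.exists_isMinOn hKne
    (continuous_const.dist continuous_id).continuousOn (f := fun p => dist o p)
  obtain ⟨r, hr, hmr⟩ := hmK
  have hbet : dist u m + dist m v = dist u v := mem_image_between hg ⟨r, hr, hmr⟩
  refine ⟨m, hbet, ?_, ?_⟩
  · -- glue geodesic o→m with m→u (which is g reversed on [0,r])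
    obtain ⟨g1, hg1, -⟩ := hX.1 o m
    have hdum : dist u m = r := by rw [← hmr]; exact geo_dist_left_s7 hg hr
    have hdmu : dist m u = r := by rw [dist_comm]; exact hdum
    set gm : ℝ → X := fun t => g (r - t) with hgm
    have hgmgeo : IsGeodesicSegment gm m u := by
      refine ⟨by simp [hgm, hmr], by simp [hgm, hdmu, hg.1], ?_⟩
      intro x hx y hy
      rw [hdmu] at hx hy
      have hx' : r - x ∈ Set.Icc 0 (dist u v) := ⟨by linarith [hx.2], by linarith [hx.1, hr.2]⟩
      have hy' : r - y ∈ Set.Icc 0 (dist u v) := ⟨by linarith [hy.2], by linarith [hy.1, hr.2]⟩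
      rw [hgm]
      simp only
      rw [hg.2.2 _ hx' _ hy']
      rw [show r - x - (r - y) = -(x - y) by ring, abs_neg]
    have hsub : gm '' Set.Icc 0 (dist m u) ⊆ K := by
      rintro p ⟨t, ht, rfl⟩
      rw [hdmu] at ht
      exact ⟨r - t, ⟨by linarith [ht.2], by linarith [ht.1, hr.2]⟩, rfl⟩
    have hinter : (g1 '' Set.Icc 0 (dist o m)) ∩ (gm '' Set.Icc 0 (dist m u)) = {m} := by
      apply Set.eq_singleton_iff_unique_mem.2
      constructor
      · exact ⟨⟨dist o m, ⟨dist_nonneg, le_refl _⟩, hg1.2.1⟩,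
          ⟨0, ⟨le_refl 0, dist_nonneg⟩, hgmgeo.1⟩⟩
      · rintro p ⟨⟨s, hs, rfl⟩, hp2⟩
        have h1 : dist o (g1 s) = s := geo_dist_left_s7 hg1 hs
        have h2 : dist (g1 s) m = dist o m - s := geo_dist_right hg1 hs
        have hge : dist o m ≤ dist o (g1 s) := hmin (hsub hp2)
        have hseq : s = dist o m := le_antisymm hs.2 (by rw [← h1]; exact hge)
        have : dist (g1 s) m = 0 := by rw [h2, hseq]; ring
        exact dist_eq_zero.1 this
    obtain ⟨h, hh, himg⟩ := hX.2 o m u g1 gm hg1 hgmgeo hinter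
    have hmh : m ∈ h '' Set.Icc 0 (dist o u) := by
      rw [himg]; exact Or.inl ⟨dist o m, ⟨dist_nonneg, le_refl _⟩, hg1.2.1⟩
    exact mem_image_between hh hmh
  · -- glue geodesic o→m with m→v (which is g shifted on [r, d])
    obtain ⟨g1, hg1, -⟩ := hX.1 o m
    have hdum : dist u m = r := by rw [← hmr]; exact geo_dist_left_s7 hg hr
    have hdmv : dist m v = dist u v - r := by rw [← hmr]; exact geo_dist_right hg hr
    set gm : ℝ → X := fun t => g (r + t) with hgm
    have hgmgeo : IsGeodesicSegment gm m v := by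
      refine ⟨by simp [hgm, hmr], by simp [hgm, hdmv, hg.2.1], ?_⟩
      intro x hx y hy
      rw [hdmv] at hx hy
      have hx' : r + x ∈ Set.Icc 0 (dist u v) := ⟨by linarith [hx.1, hr.1], by linarith [hx.2]⟩
      have hy' : r + y ∈ Set.Icc 0 (dist u v) := ⟨by linarith [hy.1, hr.1], by linarith [hy.2]⟩
      rw [hgm]
      simp only
      rw [hg.2.2 _ hx' _ hy']
      congr 1
      ring
    have hsub : gm '' Set.Icc 0 (dist m v) ⊆ K := by
      rintro p ⟨t, ht, rfl⟩
      rw [hdmv] at ht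
      exact ⟨r + t, ⟨by linarith [ht.1, hr.1], by linarith [ht.2]⟩, rfl⟩
    have hinter : (g1 '' Set.Icc 0 (dist o m)) ∩ (gm '' Set.Icc 0 (dist m v)) = {m} := by
      apply Set.eq_singleton_iff_unique_mem.2
      constructor
      · exact ⟨⟨dist o m, ⟨dist_nonneg, le_refl _⟩, hg1.2.1⟩,
          ⟨0, ⟨le_refl 0, dist_nonneg⟩, hgmgeo.1⟩⟩
      · rintro p ⟨⟨s, hs, rfl⟩, hp2⟩
        have h1 : dist o (g1 s) = s := geo_dist_left_s7 hg1 hs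
        have h2 : dist (g1 s) m = dist o m - s := geo_dist_right hg1 hs
        have hge : dist o m ≤ dist o (g1 s) := hmin (hsub hp2)
        have hseq : s = dist o m := le_antisymm hs.2 (by rw [← h1]; exact hge)
        have : dist (g1 s) m = 0 := by rw [h2, hseq]; ring
        exact dist_eq_zero.1 this
    obtain ⟨h, hh, himg⟩ := hX.2 o m v g1 gm hg1 hgmgeo hinter
    have hmh : m ∈ h '' Set.Icc 0 (dist o v) := by
      rw [himg]; exact Or.inl ⟨dist o m, ⟨dist_nonneg, le_refl _⟩, hg1.2.1⟩
    exact mem_image_between hh hmh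

/-- Gromov product -/
noncomputable def gp (o x y : X) : ℝ := (dist o x + dist o y - dist x y) / 2

lemma gp_nonneg (o x y : X) : 0 ≤ gp o x y := by
  have := dist_triangle x o y
  rw [dist_comm x o] at this
  unfold gp; linarith

lemma gp_le_left (o x y : X) : gp o x y ≤ dist o x := by
  have := dist_triangle o x y
  unfold gp; linarith

lemma gp_comm (o x y : X) : gp o x y = gp o y x := by
  unfold gp; rw [dist_comm x y]; ring

lemma gp_median (hX : IsRealTree X) (o x y : X) :
    ∃ m : X, gp o x y = dist o m ∧ dist x m + dist m y = dist x y ∧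
      dist o m + dist m x = dist o x ∧ dist o m + dist m y = dist o y := by
  obtain ⟨m, h1, h2, h3⟩ := exists_median hX o x y
  refine ⟨m, ?_, h1, h2, h3⟩
  unfold gp
  have hmx : dist m x = dist x m := dist_comm m x
  linarith [h1, h2, h3]

/-- the four-point (0-hyperbolicity) inequality -/
lemma gp_fourpoint (hX : IsRealTree X) (o x y z : X) :
    min (gp o x y) (gp o y z) ≤ gp o x z := by
  obtain ⟨m1, e1, f1, f2, f3⟩ := gp_median hX o x y
  obtain ⟨m2, e2, k1, k2, k3⟩ := gp_median hX o y z
  have hb1 : dist o m1 + dist m1 y = dist o y := f3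
  have hb2 : dist o m2 + dist m2 y = dist o y := k2
  have hd : dist m1 m2 = |dist o m1 - dist o m2| := between_dist hX hb1 hb2
  have htri : dist x z ≤ dist x m1 + dist m1 m2 + dist m2 z :=
    (dist_triangle x m1 z).trans (by linarith [dist_triangle m1 m2 z])
  rw [e1, e2]
  unfold gp
  rcases abs_cases (dist o m1 - dist o m2) with ⟨ha, ha'⟩ | ⟨ha, ha'⟩ <;>
    rcases min_cases (dist o m1) (dist o m2) with ⟨hm, hm'⟩ | ⟨hm, hm'⟩ <;>
    rw [hm] <;>
    linarith [hd, htri, f2, k3, dist_comm m1 x, dist_comm m2 z]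

/-- every point lies "below" some vertex: key consequence of spanning -/
lemma exists_vertex_above (hX : IsRealTree X) {V : Set X}
    (hspan : ∀ x : X, ∃ u ∈ V, ∃ v ∈ V, ∃ g : ℝ → X,
      IsGeodesicSegment g u v ∧ x ∈ g '' Set.Icc 0 (dist u v))
    (o x : X) : ∃ w ∈ V, dist o x + dist x w = dist o w := by
  obtain ⟨u, hu, v, hv, g, hg, hxg⟩ := hspan x
  have hbx : dist u x + dist x v = dist u v := mem_image_between hg hxg
  obtain ⟨m, m1, m2, m3⟩ := exists_median hX o u v
  have hdxm : dist x m = |dist u x - dist u m| := between_dist hX hbx m1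
  rcases le_total (dist u x) (dist u m) with hc | hc
  · refine ⟨u, hu, ?_⟩
    have h2 : dist x m = dist u m - dist u x := by rw [hdxm, abs_of_nonpos (by linarith)]; ring
    have hA : dist o u ≤ dist o x + dist x u := dist_triangle o x u
    have hB : dist o x ≤ dist o m + dist m x := dist_triangle o m x
    have hmu : dist m u = dist u m := dist_comm m u
    have hxu : dist x u = dist u x := dist_comm x u
    have hmx : dist m x = dist x m := dist_comm m x
    linarith [m2]
  · refine ⟨v, hv, ?_⟩
    have h2 : dist x m = dist u x - dist u m := by rw [hdxm, abs_of_nonneg (by linarith)]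
    have hA : dist o v ≤ dist o x + dist x v := dist_triangle o x v
    have hB : dist o x ≤ dist o m + dist m x := dist_triangle o m x
    have hmx : dist m x = dist x m := dist_comm m x
    linarith [m1, m3, hbx]

end TreeGeometry

section SpConstruction

/-- geometric coefficients -/
noncomputable def cf (n : ℕ) : ℝ := (3:ℝ)⁻¹ ^ (n + 1)

lemma cf_pos (n : ℕ) : 0 < cf n := by
  simp only [cf]; positivity

lemma summable_cf : Summable cf := by
  have h : Summable (fun n : ℕ => (3:ℝ)⁻¹ ^ n) :=
    summable_geometric_of_lt_one (by norm_num) (by norm_num)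
  exact (h.mul_right (3:ℝ)⁻¹).congr (fun n => by simp [cf, pow_succ])

lemma tsum_cf_add (k : ℕ) : ∑' i : ℕ, cf (i + k) = cf k * (3 / 2) := by
  have h1 : ∀ i : ℕ, cf (i + k) = cf k * (3:ℝ)⁻¹ ^ i := by
    intro i
    rw [cf, cf, show i + k + 1 = (k + 1) + i by ring, pow_add]
  simp_rw [h1]
  rw [tsum_mul_left, tsum_geometric_of_lt_one (by norm_num) (by norm_num)]
  norm_num

lemma summable_cf_add (k : ℕ) : Summable (fun i : ℕ => cf (i + k)) :=
  (summable_nat_add_iff k).2 summable_cf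

/-- the function used in the embedding -/
noncomputable def mkFun (ρ : ℝ) (a : ℕ → ℝ) : ℝ → ℝ :=
  fun t => ∑' n, cf n * max 0 (max 0 (min t ρ) - a n)

lemma clamp_mem (ρ t : ℝ) (hρ : 0 ≤ ρ) : max 0 (min t ρ) ∈ Set.Icc 0 ρ :=
  ⟨le_max_left _ _, max_le hρ (min_le_right _ _)⟩

lemma summable_mk' (a : ℕ → ℝ) (ha : ∀ n, 0 ≤ a n) (u : ℝ) :
    Summable (fun n => cf n * max 0 (u - a n)) := by
  apply Summable.of_nonneg_of_le (fun n => mul_nonneg (cf_pos n).le (le_max_left _ _))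
    (fun n => ?_) (summable_cf.mul_right (max 0 u))
  have h1 : max 0 (u - a n) ≤ max 0 u := max_le_max (le_refl 0) (by linarith [ha n])
  exact mul_le_mul_of_nonneg_left h1 (cf_pos n).le

noncomputable def mkSp (ρ : ℝ) (hρ : 0 ≤ ρ) (a : ℕ → ℝ) (ha : ∀ n, 0 ≤ a n) : Sp where
  ρ := ρ
  toFun := mkFun ρ a
  ρ_nonneg := hρ
  contOn := by
    have hcont : Continuous (mkFun ρ a) := by
      apply continuous_tsum (u := fun n => cf n * ρ)
      · intro n
        apply Continuous.mul continuous_const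
        apply Continuous.max continuous_const
        exact ((continuous_const.max (continuous_id.min continuous_const)).sub continuous_const)
      · exact summable_cf.mul_right ρ
      · intro n t
        have h1 : (0:ℝ) ≤ cf n * max 0 (max 0 (min t ρ) - a n) :=
          mul_nonneg (cf_pos n).le (le_max_left _ _)
        rw [Real.norm_eq_abs, abs_of_nonneg h1]
        apply mul_le_mul_of_nonneg_left _ (cf_pos n).le
        exact max_le hρ (by linarith [(clamp_mem ρ t hρ).2, ha n])
    exact hcont.continuousOn
  zero_at_zero := by
    have : ∀ n, cf n * max 0 (max 0 (min (0:ℝ) ρ) - a n) = 0 := by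
      intro n
      have h1 : min (0:ℝ) ρ = 0 := min_eq_left hρ
      rw [h1, max_self]
      have : max 0 (0 - a n) = 0 := max_eq_left (by linarith [ha n])
      rw [this, mul_zero]
    simp only [mkFun]
    rw [tsum_congr this, tsum_zero]
  eq_clamp := by
    intro t
    have hc : max 0 (min (max 0 (min t ρ)) ρ) = max 0 (min t ρ) := by
      have h1 : min (max 0 (min t ρ)) ρ = max 0 (min t ρ) :=
        min_eq_left (clamp_mem ρ t hρ).2
      rw [h1]
      exact max_eq_right (clamp_mem ρ t hρ).1
    simp only [mkFun, hc]

lemma mkSp_rho (ρ : ℝ) (hρ : 0 ≤ ρ) (a : ℕ → ℝ) (ha : ∀ n, 0 ≤ a n) :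
    (mkSp ρ hρ a ha).ρ = ρ := rfl

lemma mkSp_eval (ρ : ℝ) (hρ : 0 ≤ ρ) (a : ℕ → ℝ) (ha : ∀ n, 0 ≤ a n)
    {t : ℝ} (ht : t ∈ Set.Icc 0 ρ) :
    (mkSp ρ hρ a ha).toFun t = ∑' n, cf n * max 0 (t - a n) := by
  have hc : max 0 (min t ρ) = t := by
    rw [min_eq_left ht.2]
    exact max_eq_right ht.1
  show mkFun ρ a t = _
  simp only [mkFun, hc]

/-- THE key computation: the segregation moment of the two constructed functions is `s`. -/
lemma seg_mkSp (ρ1 ρ2 s : ℝ) (a b : ℕ → ℝ)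
    (hρ1 : 0 ≤ ρ1) (hρ2 : 0 ≤ ρ2)
    (ha : ∀ n, 0 ≤ a n) (hb : ∀ n, 0 ≤ b n)
    (hs0 : 0 ≤ s) (hs1 : s ≤ ρ1) (hs2 : s ≤ ρ2)
    (hab : ∀ n, a n < s → b n = a n) (hba : ∀ n, b n < s → a n = b n)
    (hwit : s < ρ1 → ∃ m, a m = ρ1 ∧ b m = s) :
    seg (mkSp ρ1 hρ1 a ha) (mkSp ρ2 hρ2 b hb) = s := by
  classical
  set f1 := mkSp ρ1 hρ1 a ha with hf1
  set f2 := mkSp ρ2 hρ2 b hb with hf2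
  have hr1 : f1.ρ = ρ1 := rfl
  have hr2 : f2.ρ = ρ2 := rfl
  set T := {t | t ≤ min f1.ρ f2.ρ ∧ ∀ t' ∈ Set.Ico (0:ℝ) t, f1.toFun t' = f2.toFun t'} with hT
  have hbdd : BddAbove T := ⟨min ρ1 ρ2, fun t ht => ht.1⟩
  -- `s` belongs to the set
  have hage : ∀ n, s ≤ a n → s ≤ b n := by
    intro n h
    by_contra hc
    push_neg at hc
    have := hba n hc
    linarith
  have hbge : ∀ n, s ≤ b n → s ≤ a n := by
    intro n h
    by_contra hc
    push_neg at hc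
    have := hab n hc
    linarith
  have hmem : s ∈ T := by
    refine ⟨le_min hs1 hs2, ?_⟩
    intro t' ht'
    rw [mkSp_eval ρ1 hρ1 a ha ⟨ht'.1, le_trans ht'.2.le hs1⟩,
        mkSp_eval ρ2 hρ2 b hb ⟨ht'.1, le_trans ht'.2.le hs2⟩]
    apply tsum_congr
    intro n
    by_cases hc : a n < s
    · rw [hab n hc]
    · push_neg at hc
      have hcb := hage n hc
      have e1 : max 0 (t' - a n) = 0 := max_eq_left (by linarith [ht'.2])
      have e2 : max 0 (t' - b n) = 0 := max_eq_left (by linarith [ht'.2])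
      rw [e1, e2]
  apply le_antisymm
  · -- upper bound
    apply csSup_le ⟨s, hmem⟩
    intro t ht
    by_contra hc
    push_neg at hc
    obtain ⟨htle0, htagree⟩ := ht
    have htle : t ≤ min ρ1 ρ2 := htle0
    have htρ1 : t ≤ ρ1 := le_trans htle (min_le_left _ _)
    have htρ2 : t ≤ ρ2 := le_trans htle (min_le_right _ _)
    have hsρ1 : s < ρ1 := lt_of_lt_of_le hc htρ1
    obtain ⟨m, ham, hbm⟩ := hwit hsρ1
    -- the "bad" indices
    set P : ℕ → Prop := fun n => (a n = s ∧ s < b n) ∨ (b n = s ∧ s < a n) with hP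
    have hPm : P m := Or.inr ⟨hbm, by rw [ham]; exact hsρ1⟩
    have hex : ∃ n, P n := ⟨m, hPm⟩
    set m' := Nat.find hex with hm'def
    have hPm' : P m' := Nat.find_spec hex
    have hminP : ∀ k, k < m' → ¬ P k := fun k hk => Nat.find_min hex hk
    -- threshold
    set κ : ℕ → ℝ := fun n =>
      if n = m' then max (a n) (b n) else if s < min (a n) (b n) then min (a n) (b n) else t
      with hκ
    have hκgt : ∀ n ∈ Finset.range (m' + 1), s < κ n := by
      intro n _
      by_cases hn : n = m'
      · rw [hκ]
        simp only [hn, if_pos]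
        rcases hPm' with ⟨h1, h2⟩ | ⟨h1, h2⟩
        · subst hn; exact lt_of_lt_of_le h2 (le_max_right _ _)
        · subst hn; exact lt_of_lt_of_le h2 (le_max_left _ _)
      · rw [hκ]
        simp only [hn, if_false]
        by_cases h2 : s < min (a n) (b n)
        · rw [if_pos h2]; exact h2
        · rw [if_neg h2]; exact hc
    have hrangene : (Finset.range (m' + 1)).Nonempty := ⟨0, Finset.mem_range.2 (Nat.succ_pos _)⟩
    set M := min t ((Finset.range (m' + 1)).inf' hrangene κ) with hM
    have hsM : s < M := by
      apply lt_min hc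
      rw [Finset.lt_inf'_iff]
      exact hκgt
    set r := (s + M) / 2 with hr
    have hsr : s < r := by rw [hr]; linarith
    have hrM : r < M := by rw [hr]; linarith
    have hrt : r < t := lt_of_lt_of_le hrM (min_le_left _ _)
    have hr0 : 0 ≤ r := le_trans hs0 hsr.le
    have hrκ : ∀ n ∈ Finset.range (m' + 1), r ≤ κ n := by
      intro n hn
      exact le_trans hrM.le (le_trans (min_le_right _ _) (Finset.inf'_le κ hn))
    -- the function values agree at r, contradiction
    have heq : f1.toFun r = f2.toFun r := htagree r ⟨hr0, hrt⟩
    rw [mkSp_eval ρ1 hρ1 a ha ⟨hr0, le_trans hrt.le htρ1⟩,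
        mkSp_eval ρ2 hρ2 b hb ⟨hr0, le_trans hrt.le htρ2⟩] at heq
    set g : ℕ → ℝ := fun n => cf n * max 0 (r - a n) - cf n * max 0 (r - b n) with hg
    have hsum1 := summable_mk' a ha r
    have hsum2 := summable_mk' b hb r
    have hgsum : Summable g := hsum1.sub hsum2
    have htsumg : ∑' n, g n = 0 := by
      rw [hg]
      rw [Summable.tsum_sub hsum1 hsum2, heq, sub_self]
    have hsplit := Summable.sum_add_tsum_nat_add (m' + 1) hgsum
    rw [htsumg] at hsplit
    -- finite part equals g m'
    have hfin : ∑ i ∈ Finset.range (m' + 1), g i = g m' := by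
      apply Finset.sum_eq_single_of_mem m' (Finset.self_mem_range_succ m')
      intro n hn hne
      have hnm : n < m' := lt_of_le_of_ne (Nat.lt_succ_iff.1 (Finset.mem_range.1 hn)) hne
      have hnP : ¬ P n := hminP n hnm
      have : max 0 (r - a n) = max 0 (r - b n) := by
        by_cases hc1 : a n < s
        · rw [hab n hc1]
        · push_neg at hc1
          have hc2 : s ≤ b n := hage n hc1
          by_cases hc3 : s < min (a n) (b n)
          · have hκn : κ n = min (a n) (b n) := by
              rw [hκ]; simp only [hne, if_false, if_pos hc3]
            have hrn : r ≤ min (a n) (b n) := by rw [← hκn]; exact hrκ n hn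
            have e1 : max 0 (r - a n) = 0 :=
              max_eq_left (by linarith [min_le_left (a n) (b n)])
            have e2 : max 0 (r - b n) = 0 :=
              max_eq_left (by linarith [min_le_right (a n) (b n)])
            rw [e1, e2]
          · push_neg at hc3
            rcases min_cases (a n) (b n) with ⟨hmn, -⟩ | ⟨hmn, -⟩ <;> rw [hmn] at hc3
            · -- a n ≤ s so a n = s; then b n = s else P n
              have haS : a n = s := le_antisymm hc3 hc1
              have hbS : b n = s := by
                by_contra hbc
                exact hnP (Or.inl ⟨haS, lt_of_le_of_ne hc2 (Ne.symm hbc)⟩)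
              rw [haS, hbS]
            · have hbS : b n = s := le_antisymm hc3 hc2
              have haS : a n = s := by
                by_contra hac
                exact hnP (Or.inr ⟨hbS, lt_of_le_of_ne hc1 (Ne.symm hac)⟩)
              rw [haS, hbS]
      rw [hg]
      simp only
      rw [this, sub_self]
    -- the term at m' has absolute value cf m' * (r - s)
    have hgm' : |g m'| = cf m' * (r - s) := by
      have hrκm : r ≤ κ m' := hrκ m' (Finset.self_mem_range_succ m')
      rw [hκ] at hrκm
      simp only [if_pos] at hrκm
      rcases hPm' with ⟨h1, h2⟩ | ⟨h1, h2⟩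
      · -- a m' = s < b m'; max = b m'  (since s < b)
        have hmax : max (a m') (b m') = b m' := max_eq_right (by linarith)
        rw [hmax] at hrκm
        have e2 : max 0 (r - b m') = 0 := max_eq_left (by linarith)
        have e1 : max 0 (r - a m') = r - s := by rw [h1]; exact max_eq_right (by linarith)
        rw [hg]
        simp only
        rw [e1, e2, mul_zero, sub_zero,
          abs_of_nonneg (mul_nonneg (cf_pos m').le (by linarith))]
      · have hmax : max (a m') (b m') = a m' := max_eq_left (by linarith)
        rw [hmax] at hrκm
        have e1 : max 0 (r - a m') = 0 := max_eq_left (by linarith)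
        have e2 : max 0 (r - b m') = r - s := by rw [h1]; exact max_eq_right (by linarith)
        rw [hg]
        simp only
        rw [e1, e2, mul_zero, zero_sub, abs_neg,
          abs_of_nonneg (mul_nonneg (cf_pos m').le (by linarith))]
    -- tail bound
    have hterm : ∀ k, |g k| ≤ cf k * (r - s) := by
      intro k
      by_cases hc1 : a k < s
      · rw [hg]; simp only
        rw [hab k hc1, sub_self, abs_zero]
        exact mul_nonneg (cf_pos k).le (by linarith)
      · push_neg at hc1
        have hc2 : s ≤ b k := hage k hc1
        have e1 : max 0 (r - a k) ≤ r - s := max_le (by linarith) (by linarith)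
        have e2 : max 0 (r - b k) ≤ r - s := max_le (by linarith) (by linarith)
        have e1' : 0 ≤ max 0 (r - a k) := le_max_left _ _
        have e2' : 0 ≤ max 0 (r - b k) := le_max_left _ _
        rw [hg]
        simp only
        rw [← mul_sub, abs_mul, abs_of_nonneg (cf_pos k).le]
        apply mul_le_mul_of_nonneg_left _ (cf_pos k).le
        rw [abs_le]
        constructor <;> linarith
    have htail : |∑' i, g (i + (m' + 1))| ≤ cf m' / 2 * (r - s) := by
      have hsg : Summable (fun i => g (i + (m' + 1))) := (summable_nat_add_iff _).2 hgsum
      have h1 : |∑' i, g (i + (m' + 1))| ≤ ∑' i, |g (i + (m' + 1))| := by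
        simpa [Real.norm_eq_abs] using norm_tsum_le_tsum_norm (f := fun i => g (i + (m' + 1)))
          (by simpa [Real.norm_eq_abs] using hsg.abs)
      have h2 : ∑' i, |g (i + (m' + 1))| ≤ ∑' i, cf (i + (m' + 1)) * (r - s) := by
        apply Summable.tsum_le_tsum (fun i => hterm _) hsg.abs
        exact (summable_cf_add (m' + 1)).mul_right _
      have h3 : ∑' i, cf (i + (m' + 1)) * (r - s) = cf m' / 2 * (r - s) := by
        rw [tsum_mul_right, tsum_cf_add]
        have : cf (m' + 1) * (3 / 2) = cf m' / 2 := by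
          rw [cf, cf, pow_succ]
          ring
        rw [this]
      linarith
    -- contradiction
    rw [hfin] at hsplit
    have : |g m'| = |∑' i, g (i + (m' + 1))| := by
      have : g m' = -∑' i, g (i + (m' + 1)) := by linarith
      rw [this, abs_neg]
    rw [hgm'] at this
    rw [← this] at htail
    nlinarith [cf_pos m', hsr]
  · exact le_csSup hbdd hmem

end SpConstruction

section Main

variable {X : Type*} [MetricSpace X]

/-- if `gp o x w < gp o x y` then `gp o y w = gp o x w` (ultrametric-type property) -/
lemma gp_eq_of_lt (hX : IsRealTree X) (o x y w : X) (h : gp o x w < gp o x y) :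
    gp o y w = gp o x w := by
  have h1 := gp_fourpoint hX o y x w
  have h2 := gp_fourpoint hX o x y w
  have hyx : gp o y x = gp o x y := gp_comm o y x
  rw [hyx] at h1
  rw [min_eq_right h.le] at h1
  rcases min_cases (gp o x y) (gp o y w) with ⟨hm, hm'⟩ | ⟨hm, hm'⟩ <;> rw [hm] at h2
  · linarith
  · linarith

theorem countable_tree_embeds_aux (X : Type*) [MetricSpace X] (hX : IsRealTree X)
    (V : Set X) (hV : V.Countable)
    (hspan : ∀ x : X, ∃ u ∈ V, ∃ v ∈ V, ∃ g : ℝ → X,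
      IsGeodesicSegment g u v ∧ x ∈ g '' Set.Icc 0 (dist u v)) :
    ∃ φ : X → Sp, ∀ u v : X, dS (φ u) (φ v) = dist u v := by
  rcases isEmpty_or_nonempty X with hemp | hne
  · exact ⟨fun x => isEmptyElim x, fun u => isEmptyElim u⟩
  · obtain ⟨o⟩ := hne
    obtain ⟨u0, hu0, -⟩ := hspan o
    obtain ⟨e, hVe⟩ := hV.exists_eq_range ⟨u0, hu0⟩
    refine ⟨fun x => mkSp (dist o x) dist_nonneg (fun n => gp o x (e n))
      (fun n => gp_nonneg o x (e n)), ?_⟩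
    intro x y
    have hseg : seg (mkSp (dist o x) dist_nonneg (fun n => gp o x (e n))
        (fun n => gp_nonneg o x (e n)))
        (mkSp (dist o y) dist_nonneg (fun n => gp o y (e n))
        (fun n => gp_nonneg o y (e n))) = gp o x y := by
      apply seg_mkSp
      · exact gp_nonneg o x y
      · exact gp_le_left o x y
      · rw [gp_comm]; exact gp_le_left o y x
      · intro n hn
        exact gp_eq_of_lt hX o x y (e n) hn
      · intro n hn
        exact gp_eq_of_lt hX o y x (e n) (by rwa [gp_comm o y x])
      · intro hs
        obtain ⟨w, hwV, hw⟩ := exists_vertex_above hX hspan o x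
        rw [hVe] at hwV
        obtain ⟨m, rfl⟩ := hwV
        have ham : gp o x (e m) = dist o x := by
          unfold gp
          have : dist o x + dist x (e m) = dist o (e m) := hw
          linarith
        refine ⟨m, ham, ?_⟩
        have h1 := gp_fourpoint hX o y x (e m)
        have h2 := gp_fourpoint hX o x (e m) y
        rw [gp_comm o y x] at h1
        rw [ham] at h2
        have hmin1 : min (gp o x y) (gp o x (e m)) = gp o x y := by
          rw [ham]; exact min_eq_left hs.le
        rw [hmin1] at h1
        rw [gp_comm o (e m) y] at h2
        rcases min_cases (dist o x) (gp o y (e m)) with ⟨hm, hm'⟩ | ⟨hm, hm'⟩ <;>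
          rw [hm] at h2
        · linarith
        · linarith
    have hrx : (mkSp (dist o x) dist_nonneg (fun n => gp o x (e n))
        (fun n => gp_nonneg o x (e n))).ρ = dist o x := rfl
    have hry : (mkSp (dist o y) dist_nonneg (fun n => gp o y (e n))
        (fun n => gp_nonneg o y (e n))).ρ = dist o y := rfl
    unfold dS
    rw [hseg, hrx, hry]
    unfold gp
    ring

end Main

/-- `S` is a thick real tree: every real tree spanned by a
countable set of vertices admits an isometric embedding into `S`. -/
theorem countable_tree_embeds (X : Type*) [MetricSpace X] (hX : IsRealTree X)
    (V : Set X) (hV : V.Countable)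
    (hspan : ∀ x : X, ∃ u ∈ V, ∃ v ∈ V, ∃ g : ℝ → X,
      IsGeodesicSegment g u v ∧ x ∈ g '' Set.Icc 0 (dist u v)) :
    ∃ φ : X → Sp, ∀ u v : X, dS (φ u) (φ v) = dist u v := by
  exact countable_tree_embeds_aux X hX V hV hspan
end
end
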